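/- arXiv:1403.1427 — 7 statements merged into one kernel-verified Lean document; each statement's English description precedes it below -/
import Mathlib

section
/- Let Y be a finite set indexing pairwise disjoint subsets {R_e}_{e∈Y} of X whose union is D, with bijections f_e : D_{r(e)} → R_e, and S_e, S_e* the induced operators on M = (X → K). Then Σ_{e∈Y} S_e ∘ S_e* equals the multiplication operator by χ_D. -/
/-- If `Y` is finite, the sets `R_e` (`e ∈ Y`) are pairwise disjoint
with union `D`, and `f_e : D_{r(e)} → R_e` are bijections (with inverses `g_e`),
then `Σ_{e ∈ Y} S_e ∘ S_e*` is the multiplication operator by `χ_D`. -/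
theorem cohn_leavitt_sum_SSstar_eq_mul_indicator {X K ι : Type*} [Field K]
    (Y : Finset ι) (R : ι → Set X) (Dr : ι → Set X) (D : Set X)
    (hdisj : ∀ e ∈ Y, ∀ d ∈ Y, e ≠ d → Disjoint (R e) (R d))
    (hunion : (⋃ e ∈ Y, R e) = D)
    (fe ge : ι → X → X)
    (hbij : ∀ e ∈ Y, Set.BijOn (fe e) (Dr e) (R e))
    (hinv : ∀ e ∈ Y, Set.InvOn (ge e) (fe e) (Dr e) (R e))
    (S Sstar : ι → (X → K) → (X → K))
    (hS : ∀ e φ, S e φ = (R e).indicator (φ ∘ ge e))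
    (hSstar : ∀ e φ, Sstar e φ = (Dr e).indicator (φ ∘ fe e)) :
    ∀ φ : X → K, (∑ e ∈ Y, S e (Sstar e φ)) = D.indicator φ := by
  intro φ
  funext x
  -- value of each summand
  have key : ∀ e ∈ Y, S e (Sstar e φ) x = (R e).indicator φ x := by
    intro e he
    rw [hS, hSstar]
    by_cases hx : x ∈ R e
    · have hg : ge e x ∈ Dr e := by
        obtain ⟨y, hy, hfy⟩ := (hbij e he).surjOn hx
        have := (hinv e he).1 hy
        rw [hfy] at this
        rw [this]; exact hy
      have hfg : fe e (ge e x) = x := (hinv e he).2 hx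
      simp [Set.indicator_of_mem hx, Set.indicator_of_mem hg, Function.comp, hfg]
    · simp [Set.indicator_of_notMem hx]
  simp only [Finset.sum_apply]
  rw [Finset.sum_congr rfl key]
  by_cases hxD : x ∈ D
  · rw [← hunion] at hxD
    simp only [Set.mem_iUnion] at hxD
    obtain ⟨e, he, hxe⟩ := hxD
    rw [Finset.sum_eq_single e]
    · rw [Set.indicator_of_mem hxe, Set.indicator_of_mem (hunion ▸ Set.mem_biUnion he hxe)]
    · intro d hd hde
      have : x ∉ R d := fun hxd =>
        (hdisj d hd e he hde).ne_of_mem hxd hxe rfl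
      simp [Set.indicator_of_notMem this]
    · intro h; exact absurd he h
  · have : ∀ e ∈ Y, x ∉ R e := by
      intro e he hxe
      exact hxD (hunion ▸ Set.mem_biUnion he hxe)
    rw [Set.indicator_of_notMem hxD]
    exact Finset.sum_eq_zero fun e he => Set.indicator_of_notMem (this e he) _
end

section
/- Let (E,C) be a countable separated graph and S ⊆ C_fin. There exists an (E,C,S)-algebraic branching system X ⊆ ℝ additionally satisfying: (1) R_e ∩ R_f ≠ ∅ for e ∈ X, f ∈ Y with X, Y ∈ C_v and X ≠ Y; (2) for each X ∈ C_v \ S, ⋃_{e∈X} R_e ⊊ D_v; (3) for distinct X, Y ∈ C_v \ S, ⋃_{e∈X} R_e ≠ ⋃_{f∈Y} R_f. -/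
/-!
A point of `D_v` is the vertex `v` together with a choice, for every class `Y ∈ C`, of an edge
of `Y` with source `v` or of a gap (`none`); a gap is forbidden in a class of `S` having an edge at `v`.
`R_e` consists of the points of `D_{s e}` choosing `e` in the class of `e`. Choosing edges in two
classes at once gives (1), a gap in `X` gives (2) and (3), and `D_v` is covered by the `R_e`,
`e ∈ Y ∈ S`, since a point has no gap in `Y`. Taking the product with `ℝ` makes all these sets
equinumerous with `ℝ`, and as there are only continuum many points, an injection into `ℝ`
yields the branching system.
-/

open Set Function

theorem exists_bijOn_of_equiv {α β : Type*} [Nonempty β] {s : Set α} {t : Set β} (g : s ≃ t) :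
    ∃ f : α → β, BijOn f s t := by
  classical
  refine ⟨fun x => if hx : x ∈ s then g ⟨x, hx⟩ else Classical.arbitrary β, ?_, ?_, ?_⟩
  · intro x hx
    simp [hx]
  · intro x hx y hy hxy
    simp only [hx, hy, dite_true] at hxy
    exact congrArg Subtype.val (g.injective (Subtype.ext hxy))
  · intro y hy
    exact ⟨g.symm ⟨y, hy⟩, (g.symm ⟨y, hy⟩).2, by simp⟩

theorem Set.PairwiseDisjoint.countable_of_nonempty {E : Type*} [Countable E] {C : Set (Set E)}
    (hC : C.PairwiseDisjoint id) (hne : ∀ Y ∈ C, Y.Nonempty) : C.Countable := by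
  choose g hg using fun Y : C => hne Y Y.2
  exact countable_coe_iff.1 <| Injective.countable (f := g) fun Y Z h =>
    Subtype.ext (hC.elim_set Y.2 Z.2 _ (hg Y) (by rw [h]; exact hg Z))

def thickening {Q : Type*} (ι : Q × ℝ ↪ ℝ) : Set Q ↪o Set ℝ :=
  OrderEmbedding.ofMapLEIff (fun A => ι '' (Prod.fst ⁻¹' A)) fun _ _ => by
    rw [image_subset_image_iff ι.injective, Prod.fst_surjective.preimage_subset_preimage_iff]

section thickening

variable {Q : Type*} (ι : Q × ℝ ↪ ℝ)

theorem thickening_apply (A : Set Q) : thickening ι A = ι '' (Prod.fst ⁻¹' A) := rfl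

theorem thickening_biUnion {I : Type*} (J : Set I) (A : I → Set Q) :
    thickening ι (⋃ i ∈ J, A i) = ⋃ i ∈ J, thickening ι (A i) := by
  simp only [thickening_apply, preimage_iUnion₂, image_iUnion₂]

theorem disjoint_thickening_iff {A B : Set Q} :
    Disjoint (thickening ι A) (thickening ι B) ↔ Disjoint A B := by
  rw [thickening_apply, thickening_apply, disjoint_image_iff ι.injective,
    disjoint_preimage_iff Prod.fst_surjective]

theorem inter_thickening_nonempty_iff {A B : Set Q} :
    (thickening ι A ∩ thickening ι B).Nonempty ↔ (A ∩ B).Nonempty := by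
  simp only [← not_disjoint_iff_nonempty_inter, disjoint_thickening_iff]

theorem nonempty_thickening_equiv_real {A : Set Q} (hA : A.Nonempty) :
    Nonempty (thickening ι A ≃ ℝ) := by
  obtain ⟨a, ha⟩ := hA
  refine Embedding.antisymm (Embedding.subtype _)
    ⟨fun t => ⟨ι (a, t), mem_image_of_mem ι (show (a, t).1 ∈ A from ha)⟩, fun t t' h => ?_⟩
  simpa using congrArg Subtype.val h

end thickening

universe u v

namespace Cardinal

theorem mk_arrow_le_continuum {α : Type u} {β : Type v} [Countable α] [Countable β] :
    #(α → β) ≤ 𝔠 := by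
  rw [mk_arrow]
  calc lift.{u} #β ^ lift.{v} #α ≤ ℵ₀ ^ lift.{v} #α := power_le_power_right (by simp)
    _ ≤ ℵ₀ ^ ℵ₀ := power_le_power_left aleph0_ne_zero (by simp)
    _ = 𝔠 := aleph0_power_aleph0

theorem mk_prod_le_continuum {α : Type u} {β : Type v} (hα : #α ≤ 𝔠) (hβ : #β ≤ 𝔠) :
    #(α × β) ≤ 𝔠 := by
  rw [mk_prod]
  calc lift.{v} #α * lift.{u} #β ≤ 𝔠 * 𝔠 := mul_le_mul' (by simpa using hα) (by simpa using hβ)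
    _ = 𝔠 := continuum_mul_self

theorem nonempty_embedding_real {α : Type u} (hα : #α ≤ 𝔠) : Nonempty (α ↪ ℝ) := by
  rw [← lift_mk_le'.{u, 0}]
  simpa [mk_real] using hα

end Cardinal

namespace ChoiceModel

variable {V E : Type*} (C : Set (Set E)) (s : E → V) (S : Set (Set E))

def Admissible (v : V) (Y : Set E) : Option E → Prop
  | none => Y ∈ S → ∀ e ∈ Y, s e ≠ v
  | some e => e ∈ Y ∧ s e = v

def D (v : V) : Set (V × (C → Option E)) :=
  {p | p.1 = v ∧ ∀ Y : C, Admissible s S v Y (p.2 Y)}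

def R (e : E) : Set (V × (C → Option E)) :=
  {p | p ∈ D C s S (s e) ∧ ∀ Y : C, e ∈ (Y : Set E) → p.2 Y = some e}

open Classical in
noncomputable def pin (e : E) (σ : C → Option E) : C → Option E :=
  fun Y => if e ∈ (Y : Set E) then some e else σ Y

theorem exists_admissible (v : V) (Y : Set E) : ∃ o, Admissible s S v Y o := by
  by_cases h : ∃ e ∈ Y, s e = v
  · obtain ⟨e, he, hv⟩ := h
    exact ⟨some e, he, hv⟩
  · push Not at h
    exact ⟨none, fun _ => h⟩

theorem exists_mem_D (v : V) : ∃ σ : C → Option E, (v, σ) ∈ D C s S v := by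
  choose σ hσ using fun Y : C => exists_admissible s S v Y
  exact ⟨σ, rfl, hσ⟩

variable {C s S}

theorem R_subset_D (e : E) : R C s S e ⊆ D C s S (s e) := fun _ hp => hp.1

theorem pin_mem_D {e : E} {v : V} {σ : C → Option E} (hσ : (v, σ) ∈ D C s S v) (he : s e = v) :
    (v, pin C e σ) ∈ D C s S v := by
  refine ⟨rfl, fun Y => ?_⟩
  by_cases heY : e ∈ (Y : Set E)
  · simp only [pin, if_pos heY]
    exact ⟨heY, he⟩
  · simpa only [pin, if_neg heY] using hσ.2 Y

theorem pin_mem_R {e : E} {σ : C → Option E} (hσ : (s e, σ) ∈ D C s S (s e)) :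
    (s e, pin C e σ) ∈ R C s S e :=
  ⟨pin_mem_D hσ rfl, fun _ heY => if_pos heY⟩

theorem pin_mem_R_of_mem_R {e f : E} {σ : C → Option E} (hσ : (s f, σ) ∈ R C s S f)
    (he : s e = s f) (hef : ∀ Y : C, f ∈ (Y : Set E) → e ∉ (Y : Set E)) :
    (s f, pin C e σ) ∈ R C s S f :=
  ⟨pin_mem_D hσ.1 he, fun Y hfY => by simpa only [pin, if_neg (hef Y hfY)] using hσ.2 Y hfY⟩

open Classical in
theorem update_none_mem_D {v : V} {σ : C → Option E} (hσ : (v, σ) ∈ D C s S v) {Y : C}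
    (hY : (Y : Set E) ∉ S) : (v, update σ Y none) ∈ D C s S v :=
  ⟨rfl, (forall_update_iff σ fun Z o => Admissible s S v Z o).2
    ⟨fun hYS => absurd hYS hY, fun Z _ => hσ.2 Z⟩⟩

theorem notMem_R_of_eq_none {p : V × (C → Option E)} {Y : C} (hp : p.2 Y = none) {e : E}
    (he : e ∈ (Y : Set E)) : p ∉ R C s S e := fun h => by
  simp [h.2 Y he] at hp

theorem D_nonempty (v : V) : (D C s S v).Nonempty :=
  let ⟨_, hσ⟩ := exists_mem_D C s S v; ⟨_, hσ⟩

theorem R_nonempty (e : E) : (R C s S e).Nonempty :=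
  let ⟨_, hσ⟩ := exists_mem_D C s S (s e); ⟨_, pin_mem_R hσ⟩

theorem disjoint_D {u v : V} (huv : u ≠ v) : Disjoint (D C s S u) (D C s S v) :=
  disjoint_left.2 fun _ hu hv => huv (hu.1.symm.trans hv.1)

theorem disjoint_R {Y : Set E} (hY : Y ∈ C) {e d : E} (he : e ∈ Y) (hd : d ∈ Y) (hed : e ≠ d) :
    Disjoint (R C s S e) (R C s S d) :=
  disjoint_left.2 fun _ hpe hpd =>
    hed (Option.some_injective _ ((hpe.2 ⟨Y, hY⟩ he).symm.trans (hpd.2 ⟨Y, hY⟩ hd)))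

theorem D_eq_biUnion_R (hC : C.PairwiseDisjoint id) {Y : Set E} (hYC : Y ∈ C) (hYS : Y ∈ S)
    (hY : Y.Nonempty) {v : V} (hv : ∀ e ∈ Y, s e = v) : D C s S v = ⋃ e ∈ Y, R C s S e := by
  refine subset_antisymm (fun p hp => ?_) (iUnion₂_subset fun e he => hv e he ▸ R_subset_D e)
  obtain ⟨e₀, he₀⟩ := hY
  have hpY := hp.2 ⟨Y, hYC⟩
  cases hpe : p.2 ⟨Y, hYC⟩ with
  | none => rw [hpe] at hpY; exact absurd (hv e₀ he₀) (hpY hYS e₀ he₀)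
  | some e =>
    rw [hpe] at hpY
    obtain ⟨heY, hev⟩ := hpY
    refine mem_iUnion₂.2 ⟨e, heY, hev ▸ hp, fun Z heZ => ?_⟩
    obtain rfl : (Z : Set E) = Y := hC.elim_set Z.2 hYC e heZ heY
    exact hpe

theorem inter_R_nonempty (hC : C.PairwiseDisjoint id) {X Y : Set E} (hX : X ∈ C) (hY : Y ∈ C)
    (hXY : X ≠ Y) {e f : E} (he : e ∈ X) (hf : f ∈ Y) (hef : s e = s f) :
    (R C s S e ∩ R C s S f).Nonempty := by
  obtain ⟨σ, hσ⟩ := exists_mem_D C s S (s f)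
  refine ⟨(s f, pin C e (pin C f σ)), hef ▸ pin_mem_R (hef ▸ pin_mem_D hσ rfl),
    pin_mem_R_of_mem_R (pin_mem_R hσ) hef fun Z hfZ heZ => hXY ?_⟩
  rw [hC.elim_set hX Z.2 e he heZ, hC.elim_set Z.2 hY f hfZ hf]

theorem biUnion_R_ssubset_D {X : Set E} (hX : X ∈ C) (hXS : X ∉ S) {v : V}
    (hv : ∀ e ∈ X, s e = v) : ⋃ e ∈ X, R C s S e ⊂ D C s S v := by
  classical
  refine (ssubset_iff_of_subset (iUnion₂_subset fun e he => hv e he ▸ R_subset_D e)).2 ?_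
  obtain ⟨σ, hσ⟩ := exists_mem_D C s S v
  refine ⟨_, update_none_mem_D hσ (Y := ⟨X, hX⟩) hXS, fun hp => ?_⟩
  obtain ⟨e, he, hpe⟩ := mem_iUnion₂.1 hp
  exact notMem_R_of_eq_none (update_self _ _ _) he hpe

theorem biUnion_R_ne (hC : C.PairwiseDisjoint id) {X Y : Set E} (hX : X ∈ C) (hY : Y ∈ C)
    (hYS : Y ∉ S) (hXY : X ≠ Y) (hXne : X.Nonempty) :
    ⋃ e ∈ X, R C s S e ≠ ⋃ f ∈ Y, R C s S f := by
  classical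
  obtain ⟨e, he⟩ := hXne
  obtain ⟨σ, hσ⟩ := exists_mem_D C s S (s e)
  have heY : e ∉ Y := fun heY => hXY (hC.elim_set hX hY e he heY)
  have hp := pin_mem_R (update_none_mem_D hσ (Y := ⟨Y, hY⟩) hYS)
  intro h
  have hp' := h ▸ mem_iUnion₂.2 ⟨e, he, hp⟩
  obtain ⟨f, hf, hpf⟩ := mem_iUnion₂.1 hp'
  refine notMem_R_of_eq_none (Y := ⟨Y, hY⟩) ?_ hf hpf
  simp [pin, heY]

theorem nonempty_embedding [Countable V] [Countable E] [Countable C] :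
    Nonempty ((V × (C → Option E)) × ℝ ↪ ℝ) :=
  Cardinal.nonempty_embedding_real <| Cardinal.mk_prod_le_continuum
    (Cardinal.mk_prod_le_continuum (Cardinal.mk_le_aleph0.trans Cardinal.aleph0_le_continuum)
      Cardinal.mk_arrow_le_continuum) Cardinal.mk_real.le

end ChoiceModel

open ChoiceModel

theorem exists_branching_system_with_extra_properties_general
    (V E : Type*) [Countable V] [Countable E] (r s : E → V)
    (C : Set (Set E))
    (hC1 : ∀ Y ∈ C, Y.Nonempty)
    (hC3 : ∀ Y ∈ C, ∀ Z ∈ C, Y ≠ Z → Disjoint Y Z)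
    (S : Set (Set E)) (hSC : S ⊆ C) :
    ∃ (𝕏 : Set ℝ) (R : E → Set ℝ) (D : V → Set ℝ) (f : E → ℝ → ℝ),
      (∀ e, R e ⊆ 𝕏) ∧ (∀ v, D v ⊆ 𝕏) ∧
      -- the branching-system conditions of Definition 2.1
      (∀ Y ∈ C, ∀ e ∈ Y, ∀ d ∈ Y, e ≠ d → Disjoint (R e) (R d)) ∧
      (∀ u v : V, u ≠ v → Disjoint (D u) (D v)) ∧
      (∀ e, R e ⊆ D (s e)) ∧
      (∀ Y ∈ S, ∀ v : V, (∀ e ∈ Y, s e = v) → D v = ⋃ e ∈ Y, R e) ∧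
      (∀ e, Set.BijOn (f e) (D (r e)) (R e)) ∧
      -- (1) nonempty intersections across distinct classes at the same vertex
      (∀ X ∈ C, ∀ Y ∈ C, X ≠ Y →
        ∀ e ∈ X, ∀ f' ∈ Y, s e = s f' → (R e ∩ R f').Nonempty) ∧
      -- (2) strict inclusion for classes not in S
      (∀ X ∈ C, X ∉ S → ∀ v : V, (∀ e ∈ X, s e = v) → (⋃ e ∈ X, R e) ⊂ D v) ∧
      -- (3) distinct unions for distinct classes (at the same vertex) not in S
      (∀ X ∈ C, X ∉ S → ∀ Y ∈ C, Y ∉ S → X ≠ Y →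
        (∀ e ∈ X, ∀ f' ∈ Y, s e = s f') →
        (⋃ e ∈ X, R e) ≠ ⋃ f' ∈ Y, R f') := by
  have hC : C.PairwiseDisjoint id := fun X hX Y hY h => hC3 X hX Y hY h
  have := (hC.countable_of_nonempty hC1).to_subtype
  obtain ⟨ι⟩ := nonempty_embedding (V := V) (C := C)
  have hbij : ∀ e, ∃ g : ℝ → ℝ,
      BijOn g (thickening ι (D C s S (r e))) (thickening ι (R C s S e)) := fun e =>
    let ⟨g₁⟩ := nonempty_thickening_equiv_real ι (D_nonempty (r e))
    let ⟨g₂⟩ := nonempty_thickening_equiv_real ι (R_nonempty e)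
    exists_bijOn_of_equiv (g₁.trans g₂.symm)
  choose f hf using hbij
  refine ⟨univ, fun e => thickening ι (R C s S e), fun v => thickening ι (D C s S v), f,
    fun _ => subset_univ _, fun _ => subset_univ _, ?_, ?_, ?_, ?_, hf, ?_, ?_, ?_⟩
  · exact fun Y hY e he d hd hed => (disjoint_thickening_iff ι).2 (disjoint_R hY he hd hed)
  · exact fun u v huv => (disjoint_thickening_iff ι).2 (disjoint_D huv)
  · exact fun e => (thickening ι).monotone (R_subset_D e)
  · intro Y hY v hv
    dsimp only
    rw [← thickening_biUnion, D_eq_biUnion_R hC (hSC hY) hY (hC1 Y (hSC hY)) hv]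
  · exact fun X hX Y hY hXY e he f' hf' hef =>
      (inter_thickening_nonempty_iff ι).2 (inter_R_nonempty hC hX hY hXY he hf' hef)
  · intro X hX hXS v hv
    rw [← thickening_biUnion]
    exact (thickening ι).lt_iff_lt.2 (biUnion_R_ssubset_D hX hXS hv)
  · intro X hX _ Y hY hYS hXY _
    rw [← thickening_biUnion, ← thickening_biUnion]
    exact (thickening ι).injective.ne (biUnion_R_ne hC hX hY hYS hXY (hC1 X hX))

/-- For a countable separated graph `(E,C)` and `S ⊆ C_fin` there exists
an `(E,C,S)`-algebraic branching system `𝕏 ⊆ ℝ` additionally satisfying: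
(1) `R_e ∩ R_f ≠ ∅` for `e ∈ X`, `f ∈ Y` with `X, Y ∈ C_v`, `X ≠ Y`;
(2) for each `X ∈ C_v \ S`, `⋃_{e∈X} R_e ⊊ D_v`;
(3) for distinct `X, Y ∈ C_v \ S`, `⋃_{e∈X} R_e ≠ ⋃_{f∈Y} R_f`. -/
theorem exists_branching_system_with_extra_properties
    (V E : Type*) [Countable V] [Countable E] (r s : E → V)
    (C : Set (Set E))
    (hC1 : ∀ Y ∈ C, Y.Nonempty)
    (hC2 : ∀ Y ∈ C, ∀ e ∈ Y, ∀ f ∈ Y, s e = s f)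
    (hC3 : ∀ Y ∈ C, ∀ Z ∈ C, Y ≠ Z → Disjoint Y Z)
    (hC4 : ∀ e : E, ∃ Y ∈ C, e ∈ Y)
    (S : Set (Set E)) (hSC : S ⊆ C) (hSfin : ∀ X ∈ S, X.Finite) :
    ∃ (𝕏 : Set ℝ) (R : E → Set ℝ) (D : V → Set ℝ) (f : E → ℝ → ℝ),
      (∀ e, R e ⊆ 𝕏) ∧ (∀ v, D v ⊆ 𝕏) ∧
      -- the branching-system conditions of Definition 2.1
      (∀ Y ∈ C, ∀ e ∈ Y, ∀ d ∈ Y, e ≠ d → Disjoint (R e) (R d)) ∧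
      (∀ u v : V, u ≠ v → Disjoint (D u) (D v)) ∧
      (∀ e, R e ⊆ D (s e)) ∧
      (∀ Y ∈ S, ∀ v : V, (∀ e ∈ Y, s e = v) → D v = ⋃ e ∈ Y, R e) ∧
      (∀ e, Set.BijOn (f e) (D (r e)) (R e)) ∧
      -- (1) nonempty intersections across distinct classes at the same vertex
      (∀ X ∈ C, ∀ Y ∈ C, X ≠ Y →
        ∀ e ∈ X, ∀ f' ∈ Y, s e = s f' → (R e ∩ R f').Nonempty) ∧
      -- (2) strict inclusion for classes not in S
      (∀ X ∈ C, X ∉ S → ∀ v : V, (∀ e ∈ X, s e = v) → (⋃ e ∈ X, R e) ⊂ D v) ∧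
      -- (3) distinct unions for distinct classes (at the same vertex) not in S
      (∀ X ∈ C, X ∉ S → ∀ Y ∈ C, Y ∉ S → X ≠ Y →
        (∀ e ∈ X, ∀ f' ∈ Y, s e = s f') →
        (⋃ e ∈ X, R e) ≠ ⋃ f' ∈ Y, R f') :=
  exists_branching_system_with_extra_properties_general V E r s C hC1 hC3 S hSC
end

section
/- Given an (E,C,S)-algebraic branching system X, there exists a K-algebra homomorphism π : L_K(E,C,S) → End_K(M), where M = (X → K), satisfying π(e) = S_e, π(e*) = S_e*, and π(v) = P_v for each edge e and vertex v, where S_e, S_e*, P_v are the operators induced by the branching system. -/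
/-- Generators of the Cohn–Leavitt algebra of a separated graph: one idempotent for
each vertex, and elements `e`, `e*` for each edge. -/
inductive CLGen (V E : Type) : Type
  | vert : V → CLGen V E
  | edge : E → CLGen V E
  | ghost : E → CLGen V E

/-- The defining relations (E1), (E2), (SCK1), (SCK2) of the Cohn–Leavitt algebra
`L_K(E,C,S)` of a separated graph `(E,C)` with `S ⊆ C_fin`, as relations on the free
algebra over the generators. -/
inductive CLRel (K V E : Type) [Field K] (r s : E → V)
    (C S : Set (Set E)) (hSfin : ∀ X ∈ S, X.Finite) :
    FreeAlgebra K (CLGen V E) → FreeAlgebra K (CLGen V E) → Prop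
  | vert_idem (v : V) :
      CLRel K V E r s C S hSfin
        (FreeAlgebra.ι K (CLGen.vert v) * FreeAlgebra.ι K (CLGen.vert v))
        (FreeAlgebra.ι K (CLGen.vert v))
  | vert_orth (u v : V) (h : u ≠ v) :
      CLRel K V E r s C S hSfin
        (FreeAlgebra.ι K (CLGen.vert u) * FreeAlgebra.ι K (CLGen.vert v)) 0
  | e1l (e : E) :
      CLRel K V E r s C S hSfin
        (FreeAlgebra.ι K (CLGen.vert (s e)) * FreeAlgebra.ι K (CLGen.edge e))
        (FreeAlgebra.ι K (CLGen.edge e))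
  | e1r (e : E) :
      CLRel K V E r s C S hSfin
        (FreeAlgebra.ι K (CLGen.edge e) * FreeAlgebra.ι K (CLGen.vert (r e)))
        (FreeAlgebra.ι K (CLGen.edge e))
  | e2l (e : E) :
      CLRel K V E r s C S hSfin
        (FreeAlgebra.ι K (CLGen.vert (r e)) * FreeAlgebra.ι K (CLGen.ghost e))
        (FreeAlgebra.ι K (CLGen.ghost e))
  | e2r (e : E) :
      CLRel K V E r s C S hSfin
        (FreeAlgebra.ι K (CLGen.ghost e) * FreeAlgebra.ι K (CLGen.vert (s e)))
        (FreeAlgebra.ι K (CLGen.ghost e))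
  | sck1_same (Y : Set E) (hY : Y ∈ C) (e : E) (he : e ∈ Y) :
      CLRel K V E r s C S hSfin
        (FreeAlgebra.ι K (CLGen.ghost e) * FreeAlgebra.ι K (CLGen.edge e))
        (FreeAlgebra.ι K (CLGen.vert (r e)))
  | sck1_diff (Y : Set E) (hY : Y ∈ C) (e f : E) (he : e ∈ Y) (hf : f ∈ Y)
      (hef : e ≠ f) :
      CLRel K V E r s C S hSfin
        (FreeAlgebra.ι K (CLGen.ghost e) * FreeAlgebra.ι K (CLGen.edge f)) 0
  | sck2 (X : Set E) (hX : X ∈ S) (v : V) (hne : X.Nonempty) (hv : ∀ e ∈ X, s e = v) :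
      CLRel K V E r s C S hSfin
        (FreeAlgebra.ι K (CLGen.vert v))
        (∑ e ∈ (hSfin X hX).toFinset,
          FreeAlgebra.ι K (CLGen.edge e) * FreeAlgebra.ι K (CLGen.ghost e))

/-- The Cohn–Leavitt algebra `L_K(E,C,S)` of the triple `(E,C,S)`. -/
abbrev CohnLeavitt (K V E : Type) [Field K] (r s : E → V)
    (C S : Set (Set E)) (hSfin : ∀ X ∈ S, X.Finite) : Type :=
  RingQuot (CLRel K V E r s C S hSfin)

/-- The canonical image of a generator in `L_K(E,C,S)`. -/
noncomputable def clMk (K V E : Type) [Field K] (r s : E → V)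
    (C S : Set (Set E)) (hSfin : ∀ X ∈ S, X.Finite) (g : CLGen V E) :
    CohnLeavitt K V E r s C S hSfin :=
  RingQuot.mkAlgHom K (CLRel K V E r s C S hSfin) (FreeAlgebra.ι K g)


/-- The operator `φ ↦ χ_A · (φ ∘ g)` on the `K`-module of functions `Ω → K`. -/
noncomputable def compOp (K : Type) [Field K] {Ω : Type} (A : Set Ω) (g : Ω → Ω) :
    Module.End K (Ω → K) where
  toFun φ := A.indicator (φ ∘ g)
  map_add' φ ψ := by
    ext x; by_cases h : x ∈ A <;> simp [Set.indicator_apply, h]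
  map_smul' c φ := by
    ext x; by_cases h : x ∈ A <;> simp [Set.indicator_apply, h]

open Classical in
lemma compOp_apply (K : Type) [Field K] {Ω : Type} (A : Set Ω) (g : Ω → Ω)
    (φ : Ω → K) (x : Ω) :
    compOp K A g φ x = if x ∈ A then φ (g x) else 0 := by
  simp [compOp, Set.indicator_apply]

/-- Theorem 2.2: Any `(E,C,S)`-algebraic branching system induces a
representation `π : L_K(E,C,S) → End_K(M)`, `M = (Ω → K)`, with `π(e) = S_e`,
`π(e*) = S_e*`, `π(v) = P_v`. -/
theorem branching_system_representation
    (K V E Ω : Type) [Field K] (r s : E → V)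
    (C : Set (Set E))
    (hC1 : ∀ Y ∈ C, Y.Nonempty)
    (hC2 : ∀ Y ∈ C, ∀ e ∈ Y, ∀ f ∈ Y, s e = s f)
    (hC3 : ∀ Y ∈ C, ∀ Z ∈ C, Y ≠ Z → Disjoint Y Z)
    (hC4 : ∀ e : E, ∃ Y ∈ C, e ∈ Y)
    (S : Set (Set E)) (hSC : S ⊆ C) (hSfin : ∀ X ∈ S, X.Finite)
    -- an (E,C,S)-algebraic branching system on Ω
    (R : E → Set Ω) (D : V → Set Ω) (fe ge : E → Ω → Ω)
    (h1 : ∀ Y ∈ C, ∀ e ∈ Y, ∀ d ∈ Y, e ≠ d → Disjoint (R e) (R d))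
    (h2 : ∀ u v : V, u ≠ v → Disjoint (D u) (D v))
    (h3 : ∀ e, R e ⊆ D (s e))
    (h4 : ∀ Y ∈ S, ∀ v : V, (∀ e ∈ Y, s e = v) → D v = ⋃ e ∈ Y, R e)
    (h5 : ∀ e, Set.BijOn (fe e) (D (r e)) (R e))
    (h6 : ∀ e, Set.InvOn (ge e) (fe e) (D (r e)) (R e)) :
    ∃ π : CohnLeavitt K V E r s C S hSfin →ₐ[K] Module.End K (Ω → K),
      (∀ e : E, π (clMk K V E r s C S hSfin (CLGen.edge e)) = compOp K (R e) (ge e)) ∧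
      (∀ e : E, π (clMk K V E r s C S hSfin (CLGen.ghost e)) = compOp K (D (r e)) (fe e)) ∧
      (∀ v : V, π (clMk K V E r s C S hSfin (CLGen.vert v)) = compOp K (D v) id) := by
  classical
  let F : FreeAlgebra K (CLGen V E) →ₐ[K] Module.End K (Ω → K) :=
    FreeAlgebra.lift K (fun g =>
      match g with
      | CLGen.vert v => compOp K (D v) id
      | CLGen.edge e => compOp K (R e) (ge e)
      | CLGen.ghost e => compOp K (D (r e)) (fe e))
  have hFv : ∀ v, F (FreeAlgebra.ι K (CLGen.vert v)) = compOp K (D v) id :=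
    fun v => FreeAlgebra.lift_ι_apply _ _
  have hFe : ∀ e, F (FreeAlgebra.ι K (CLGen.edge e)) = compOp K (R e) (ge e) :=
    fun e => FreeAlgebra.lift_ι_apply _ _
  have hFg : ∀ e, F (FreeAlgebra.ι K (CLGen.ghost e)) = compOp K (D (r e)) (fe e) :=
    fun e => FreeAlgebra.lift_ι_apply _ _
  have hge_mem : ∀ e : E, ∀ x ∈ R e, ge e x ∈ D (r e) := by
    intro e x hx
    obtain ⟨y, hy, rfl⟩ := (h5 e).surjOn hx
    rw [(h6 e).1 hy]; exact hy
  have hrel : ∀ ⦃x y⦄, CLRel K V E r s C S hSfin x y → F x = F y := by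
    intro a b h
    induction h with
    | vert_idem v =>
        rw [map_mul]; simp only [hFv]
        ext φ x
        simp only [Module.End.mul_apply, compOp_apply]
        by_cases hx : x ∈ D v <;> simp [hx]
    | vert_orth u v huv =>
        rw [map_mul, map_zero]; simp only [hFv]
        ext φ x
        simp only [Module.End.mul_apply, compOp_apply, LinearMap.zero_apply, Pi.zero_apply]
        by_cases hx : x ∈ D u
        · have : x ∉ D v := fun hv => (h2 u v huv).le_bot ⟨hx, hv⟩
          simp [hx, this]
        · simp [hx]
    | e1l e =>
        rw [map_mul]; simp only [hFv, hFe]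
        ext φ x
        simp only [Module.End.mul_apply, compOp_apply]
        by_cases hx : x ∈ R e
        · simp [hx, h3 e hx]
        · by_cases hx' : x ∈ D (s e) <;> simp [hx, hx']
    | e1r e =>
        rw [map_mul]; simp only [hFv, hFe]
        ext φ x
        simp only [Module.End.mul_apply, compOp_apply]
        by_cases hx : x ∈ R e
        · simp [hx, hge_mem e x hx]
        · simp [hx]
    | e2l e =>
        rw [map_mul]; simp only [hFv, hFg]
        ext φ x
        simp only [Module.End.mul_apply, compOp_apply]
        by_cases hx : x ∈ D (r e) <;> simp [hx]
    | e2r e =>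
        rw [map_mul]; simp only [hFv, hFg]
        ext φ x
        simp only [Module.End.mul_apply, compOp_apply]
        by_cases hx : x ∈ D (r e)
        · simp [hx, h3 e ((h5 e).mapsTo hx)]
        · simp [hx]
    | sck1_same Y hY e he =>
        rw [map_mul]; simp only [hFv, hFe, hFg]
        ext φ x
        simp only [Module.End.mul_apply, compOp_apply]
        by_cases hx : x ∈ D (r e)
        · simp [hx, (h5 e).mapsTo hx, (h6 e).1 hx]
        · simp [hx]
    | sck1_diff Y hY e f he hf hef =>
        rw [map_mul, map_zero]; simp only [hFe, hFg]
        ext φ x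
        simp only [Module.End.mul_apply, compOp_apply, LinearMap.zero_apply, Pi.zero_apply]
        by_cases hx : x ∈ D (r e)
        · have : fe e x ∉ R f := fun hm =>
            (h1 Y hY e he f hf hef).le_bot ⟨(h5 e).mapsTo hx, hm⟩
          simp [hx, this]
        · simp [hx]
    | sck2 X hX v hne hv =>
        rw [map_sum]; simp only [map_mul, hFv, hFe, hFg]
        ext φ x
        have key : ∀ e : E, (compOp K (R e) (ge e) * compOp K (D (r e)) (fe e)) φ x
            = if x ∈ R e then φ x else 0 := by
          intro e
          simp only [Module.End.mul_apply, compOp_apply]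
          by_cases hx : x ∈ R e
          · simp [hx, hge_mem e x hx, (h6 e).2 hx]
          · simp [hx]
        simp only [LinearMap.coe_sum, Finset.sum_apply, key, compOp_apply, id]
        by_cases hx : x ∈ D v
        · have hx' := hx
          rw [h4 X hX v hv] at hx'
          obtain ⟨e, heX, hxe⟩ := Set.mem_iUnion₂.mp hx'
          rw [if_pos hx, Finset.sum_eq_single e]
          · simp [hxe]
          · intro f hf hfe
            have hfX : f ∈ X := (hSfin X hX).mem_toFinset.mp hf
            have : x ∉ R f := fun hm =>
              (h1 X (hSC hX) f hfX e heX hfe).le_bot ⟨hm, hxe⟩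
            simp [this]
          · intro habs
            exact absurd ((hSfin X hX).mem_toFinset.mpr heX) habs
        · rw [if_neg hx, Finset.sum_eq_zero]
          · intro e heX
            have heX' : e ∈ X := (hSfin X hX).mem_toFinset.mp heX
            have : x ∉ R e := fun hm => hx (hv e heX' ▸ h3 e hm)
            simp [this]
  refine ⟨RingQuot.liftAlgHom K ⟨F, hrel⟩, fun e => ?_, fun e => ?_, fun v => ?_⟩ <;>
    simp only [clMk, RingQuot.liftAlgHom_mkAlgHom_apply]
  · exact hFe e
  · exact hFg e
  · exact hFv v
end

section
/- In L_K(E,C,S) for a countable separated graph, for edges e ∈ X and f ∈ Y with X, Y ∈ C_v and X ≠ Y, one has e*f ≠ 0. -/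
noncomputable section CL12Aux

open Finsupp
open scoped Classical

abbrev CLMod (K V : Type) [Field K] : Type := (V × ℕ) →₀ K

def opVert (K : Type) [Field K] {V : Type} (v : V) : Module.End K (CLMod K V) :=
  Finsupp.linearCombination K fun p => if p.1 = v then Finsupp.single p 1 else 0

def opEdge (K : Type) [Field K] {V E : Type} (r s : E → V) (τ : E → ℕ → ℕ) (g : E) :
    Module.End K (CLMod K V) :=
  Finsupp.linearCombination K fun p =>
    if p.1 = r g then Finsupp.single (s g, τ g p.2) 1 else 0

def opGhost (K : Type) [Field K] {V E : Type} (r s : E → V) (τ : E → ℕ → ℕ) (g : E) :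
    Module.End K (CLMod K V) :=
  Finsupp.linearCombination K fun p =>
    if h : p.1 = s g ∧ ∃ m, τ g m = p.2 then Finsupp.single (r g, h.2.choose) 1 else 0

variable {K V E : Type} [Field K]

lemma opVert_single (v : V) (p : V × ℕ) (c : K) :
    opVert K v (Finsupp.single p c) = if p.1 = v then Finsupp.single p c else 0 := by
  rw [opVert, linearCombination_single]
  split_ifs <;> simp [Finsupp.smul_single']

lemma opEdge_single (r s : E → V) (τ : E → ℕ → ℕ) (g : E) (p : V × ℕ) (c : K) :
    opEdge K r s τ g (Finsupp.single p c) =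
      if p.1 = r g then Finsupp.single (s g, τ g p.2) c else 0 := by
  rw [opEdge, linearCombination_single]
  split_ifs <;> simp [Finsupp.smul_single']

lemma opGhost_single (r s : E → V) (τ : E → ℕ → ℕ) (g : E) (p : V × ℕ) (c : K) :
    opGhost K r s τ g (Finsupp.single p c) =
      if h : p.1 = s g ∧ ∃ m, τ g m = p.2 then Finsupp.single (r g, h.2.choose) c else 0 := by
  rw [opGhost, linearCombination_single]
  split_ifs <;> simp [Finsupp.smul_single']

end CL12Aux

open Finsupp in
open scoped Classical in
lemma CL12.main_aux (K V E : Type) [Field K] (r s : E → V)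
    (C S : Set (Set E)) (hSC : S ⊆ C) (hSfin : ∀ X ∈ S, X.Finite)
    (τ : E → ℕ → ℕ)
    (hinj : ∀ g, Function.Injective (τ g))
    (hdisj : ∀ Z ∈ C, ∀ g ∈ Z, ∀ h ∈ Z, g ≠ h → ∀ m n, τ g m ≠ τ h n)
    (hcover : ∀ Z ∈ S, ∀ m : ℕ, ∃ g ∈ Z, ∃ n, τ g n = m)
    (e f : E) (hsame : s e = s f) (h0 : τ e 0 = τ f 0) :
    clMk K V E r s C S hSfin (CLGen.ghost e) *
      clMk K V E r s C S hSfin (CLGen.edge f) ≠ 0 := by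
  classical
  set ρ : CLGen V E → Module.End K (CLMod K V) := fun g =>
    match g with
    | CLGen.vert v => opVert K v
    | CLGen.edge g => opEdge K r s τ g
    | CLGen.ghost g => opGhost K r s τ g with hρ
  set φ : FreeAlgebra K (CLGen V E) →ₐ[K] Module.End K (CLMod K V) :=
    FreeAlgebra.lift K ρ with hφ
  have hφv : ∀ v, φ (FreeAlgebra.ι K (CLGen.vert v)) = opVert K v := fun v => by
    rw [hφ, FreeAlgebra.lift_ι_apply]
  have hφe : ∀ g, φ (FreeAlgebra.ι K (CLGen.edge g)) = opEdge K r s τ g := fun g => by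
    rw [hφ, FreeAlgebra.lift_ι_apply]
  have hφg : ∀ g, φ (FreeAlgebra.ι K (CLGen.ghost g)) = opGhost K r s τ g := fun g => by
    rw [hφ, FreeAlgebra.lift_ι_apply]
  have hrel : ∀ x y, CLRel K V E r s C S hSfin x y → φ x = φ y := by
    intro x y hxy
    induction hxy with
    | vert_idem v =>
      rw [map_mul, hφv]
      apply Finsupp.lhom_ext
      intro p c
      simp only [Module.End.mul_apply, opVert_single]
      split_ifs with h
      · rw [opVert_single, if_pos h]
      · rw [map_zero]
    | vert_orth u v h =>
      rw [map_mul, hφv, hφv, map_zero]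
      apply Finsupp.lhom_ext
      intro p c
      simp only [Module.End.mul_apply, opVert_single, LinearMap.zero_apply]
      split_ifs with h1
      · rw [opVert_single, if_neg (by rw [h1]; exact fun hh => h hh.symm)]
      · rw [map_zero]
    | e1l g =>
      rw [map_mul, hφv, hφe]
      apply Finsupp.lhom_ext
      intro p c
      simp only [Module.End.mul_apply, opEdge_single]
      split_ifs with h
      · rw [opVert_single, if_pos rfl]
      · rw [map_zero]
    | e1r g =>
      rw [map_mul, hφv, hφe]
      apply Finsupp.lhom_ext
      intro p c
      simp only [Module.End.mul_apply, opVert_single]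
      split_ifs with h
      · rfl
      · rw [map_zero, opEdge_single, if_neg h]
    | e2l g =>
      rw [map_mul, hφv, hφg]
      apply Finsupp.lhom_ext
      intro p c
      simp only [Module.End.mul_apply, opGhost_single]
      split_ifs with h
      · rw [opVert_single, if_pos rfl]
      · rw [map_zero]
    | e2r g =>
      rw [map_mul, hφv, hφg]
      apply Finsupp.lhom_ext
      intro p c
      simp only [Module.End.mul_apply, opVert_single]
      split_ifs with h
      · rfl
      · rw [map_zero, opGhost_single, dif_neg (fun hc => h hc.1)]
    | sck1_same Z hZ g hg =>
      rw [map_mul, hφv, hφe, hφg]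
      apply Finsupp.lhom_ext
      intro p c
      simp only [Module.End.mul_apply, opEdge_single, opVert_single]
      split_ifs with h
      · have hc : ((s g, τ g p.2) : V × ℕ).1 = s g ∧ ∃ m, τ g m = τ g p.2 :=
          ⟨rfl, p.2, rfl⟩
        rw [opGhost_single, dif_pos hc]
        have : hc.2.choose = p.2 := hinj g hc.2.choose_spec
        rw [this, ← h]
      · rw [map_zero]
    | sck1_diff Z hZ g h hgZ hhZ hgh =>
      rw [map_mul, hφe, hφg, map_zero]
      apply Finsupp.lhom_ext
      intro p c
      simp only [Module.End.mul_apply, opEdge_single, LinearMap.zero_apply]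
      split_ifs with h1
      · rw [opGhost_single, dif_neg]
        rintro ⟨-, m, hm⟩
        exact hdisj Z hZ g hgZ h hhZ hgh m p.2 hm
      · rw [map_zero]
    | sck2 Z hZ v hne hv =>
      rw [map_sum, hφv]
      apply Finsupp.lhom_ext
      intro p c
      obtain ⟨w, n⟩ := p
      have hterm : ∀ g ∈ (hSfin Z hZ).toFinset,
          (φ (FreeAlgebra.ι K (CLGen.edge g) * FreeAlgebra.ι K (CLGen.ghost g)))
            (Finsupp.single (w, n) c)
          = if w = v ∧ ∃ m, τ g m = n then Finsupp.single ((w, n) : V × ℕ) c else 0 := by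
        intro g hgF
        have hgZ : g ∈ Z := (Set.Finite.mem_toFinset _).1 hgF
        have hsg : s g = v := hv g hgZ
        rw [map_mul]
        simp only [Module.End.mul_apply, hφe, hφg, opGhost_single]
        by_cases hc : ((w, n) : V × ℕ).1 = s g ∧ ∃ m, τ g m = n
        · rw [dif_pos hc, opEdge_single, if_pos rfl]
          have h1 : τ g hc.2.choose = n := hc.2.choose_spec
          have h2 : w = v := hc.1.trans hsg
          rw [if_pos ⟨h2, hc.2⟩]
          simp only [h1, hsg, ← h2]
        · rw [dif_neg hc, map_zero, if_neg]
          rintro ⟨hwv, hm⟩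
          exact hc ⟨by rw [hwv, hsg], hm⟩
      rw [LinearMap.sum_apply, Finset.sum_congr rfl hterm, opVert_single]
      by_cases hwv : w = v
      · subst hwv
        rw [if_pos rfl]
        obtain ⟨g₀, hg₀Z, n₀, hn₀⟩ := hcover Z hZ n
        rw [Finset.sum_eq_single_of_mem g₀ ((Set.Finite.mem_toFinset _).2 hg₀Z)]
        · rw [if_pos ⟨rfl, n₀, hn₀⟩]
        · intro g hgF hne'
          rw [if_neg]
          rintro ⟨-, m, hm⟩
          exact hdisj Z (hSC hZ) g ((Set.Finite.mem_toFinset _).1 hgF) g₀ hg₀Z hne' m n₀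
            (by rw [hm, hn₀])
      · rw [if_neg hwv, Finset.sum_eq_zero]
        intro g hgF
        rw [if_neg (fun hc => hwv hc.1)]
  intro hzero
  have h2 := congrArg (RingQuot.liftAlgHom K ⟨φ, hrel⟩) hzero
  rw [map_zero, clMk, clMk, ← map_mul (RingQuot.mkAlgHom K _),
    RingQuot.liftAlgHom_mkAlgHom_apply, map_mul, hφg, hφe] at h2
  have h3 := DFunLike.congr_fun h2
    (Finsupp.single ((r f, 0) : V × ℕ) (1 : K))
  rw [Module.End.mul_apply, LinearMap.zero_apply, opEdge_single, if_pos rfl] at h3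
  have hc : ((s f, τ f 0) : V × ℕ).1 = s e ∧ ∃ m, τ e m = τ f 0 := ⟨hsame.symm, 0, h0⟩
  rw [opGhost_single, dif_pos hc] at h3
  exact one_ne_zero (Finsupp.single_eq_zero.mp h3)

open scoped Classical in
lemma CL12.exists_tau {E : Type} [Countable E] (C : Set (Set E))
    (hC1 : ∀ Y ∈ C, Y.Nonempty)
    (hC3 : ∀ Y ∈ C, ∀ Z ∈ C, Y ≠ Z → Disjoint Y Z)
    (hC4 : ∀ e : E, ∃ Y ∈ C, e ∈ Y)
    (S : Set (Set E)) (hSC : S ⊆ C) (hSfin : ∀ X ∈ S, X.Finite)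
    (X Y : Set E) (hX : X ∈ C) (hY : Y ∈ C) (hXY : X ≠ Y)
    (e f : E) (he : e ∈ X) (hf : f ∈ Y) :
    ∃ τ : E → ℕ → ℕ,
      (∀ g, Function.Injective (τ g)) ∧
      (∀ Z ∈ C, ∀ g ∈ Z, ∀ h ∈ Z, g ≠ h → ∀ m n, τ g m ≠ τ h n) ∧
      (∀ Z ∈ S, ∀ m : ℕ, ∃ g ∈ Z, ∃ n, τ g n = m) ∧
      τ e 0 = τ f 0 := by
  classical
  obtain ⟨ι, hι⟩ := Countable.exists_injective_nat E
  set lab : E → ℕ := fun g => if g = e ∨ g = f then 0 else ι g + 1 with hlab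
  have huniq : ∀ g : E, ∀ Z ∈ C, ∀ Z' ∈ C, g ∈ Z → g ∈ Z' → Z = Z' := by
    intro g Z hZ Z' hZ' hg hg'
    by_contra hne
    exact Set.disjoint_left.mp (hC3 Z hZ Z' hZ' hne) hg hg'
  have hlabinj : ∀ Z ∈ C, ∀ g ∈ Z, ∀ h ∈ Z, lab g = lab h → g = h := by
    intro Z hZ g hg h hh hgh
    have hef : ¬(e ∈ Z ∧ f ∈ Z) := by
      rintro ⟨heZ, hfZ⟩
      exact hXY ((huniq e Z hZ X hX heZ he).symm.trans (huniq f Z hZ Y hY hfZ hf))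
    by_cases hg' : g = e ∨ g = f <;> by_cases hh' : h = e ∨ h = f
    · rcases hg' with rfl | rfl <;> rcases hh' with rfl | rfl
      · rfl
      · exact absurd ⟨hg, hh⟩ hef
      · exact absurd ⟨hh, hg⟩ hef
      · rfl
    · simp only [hlab, if_pos hg', if_neg hh'] at hgh
      exact absurd hgh.symm (Nat.succ_ne_zero _)
    · simp only [hlab, if_neg hg', if_pos hh'] at hgh
      exact absurd hgh (Nat.succ_ne_zero _)
    · simp only [hlab, if_neg hg', if_neg hh', Nat.add_right_cancel_iff] at hgh
      exact hι hgh
  set Zc : E → Set E := fun g => (hC4 g).choose with hZc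
  have hZcC : ∀ g, Zc g ∈ C := fun g => (hC4 g).choose_spec.1
  have hZcm : ∀ g, g ∈ Zc g := fun g => (hC4 g).choose_spec.2
  have hZceq : ∀ g, ∀ Z ∈ C, g ∈ Z → Zc g = Z := fun g Z hZ hg =>
    huniq g _ (hZcC g) Z hZ (hZcm g) hg
  set rk : E → ℕ := fun g =>
    if h : Zc g ∈ S then ((hSfin _ h).toFinset.filter fun x => lab x < lab g).card else 0
    with hrk
  set τ : E → ℕ → ℕ := fun g =>
    if h : Zc g ∈ S then fun n => n * (hSfin _ h).toFinset.card + rk g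
    else fun n => Nat.pair (lab g) n with hτ
  -- description of τ in the S-case relative to a given Z
  have hτS : ∀ Z (hZS : Z ∈ S), ∀ g ∈ Z, (rk g =
        ((hSfin Z hZS).toFinset.filter fun x => lab x < lab g).card) ∧
      ∀ n, τ g n = n * (hSfin Z hZS).toFinset.card + rk g := by
    intro Z hZS g hg
    have hzg : Zc g = Z := hZceq g Z (hSC hZS) hg
    have hgS : Zc g ∈ S := hzg ▸ hZS
    have hfs : (hSfin _ hgS).toFinset = (hSfin Z hZS).toFinset :=
      (Set.Finite.toFinset_inj).mpr hzg
    constructor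
    · rw [hrk]; simp only; rw [dif_pos hgS, hfs]
    · intro n; rw [hτ]; simp only; rw [dif_pos hgS, hfs]
  have hτnS : ∀ Z, Z ∈ C → Z ∉ S → ∀ g ∈ Z, ∀ n, τ g n = Nat.pair (lab g) n := by
    intro Z hZC hZS g hg n
    have hzg : Zc g = Z := hZceq g Z hZC hg
    have hgS : Zc g ∉ S := fun h => hZS (hzg ▸ h)
    rw [hτ]; simp only; rw [dif_neg hgS]
  -- rank facts
  have hrk_lt : ∀ Z (hZS : Z ∈ S), ∀ g ∈ Z, rk g < (hSfin Z hZS).toFinset.card := by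
    intro Z hZS g hg
    rw [(hτS Z hZS g hg).1]
    refine Finset.card_lt_card ?_
    refine (Finset.ssubset_iff_of_subset (Finset.filter_subset _ _)).mpr
      ⟨g, (Set.Finite.mem_toFinset _).2 hg, ?_⟩
    simp
  have hrk_mono : ∀ Z (hZS : Z ∈ S), ∀ g ∈ Z, ∀ h ∈ Z, lab g < lab h → rk g < rk h := by
    intro Z hZS g hg h hh hlt
    rw [(hτS Z hZS g hg).1, (hτS Z hZS h hh).1]
    set F := (hSfin Z hZS).toFinset
    have hgmem : g ∈ F.filter fun x => lab x < lab h := by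
      simp only [Finset.mem_filter]
      exact ⟨(Set.Finite.mem_toFinset _).2 hg, hlt⟩
    have hsub : (F.filter fun x => lab x < lab g) ⊆
        (F.filter fun x => lab x < lab h).erase g := by
      intro x hx
      simp only [Finset.mem_filter] at hx
      refine Finset.mem_erase.mpr ⟨fun hxg => ?_, Finset.mem_filter.mpr ⟨hx.1, hx.2.trans hlt⟩⟩
      exact absurd (hxg ▸ hx.2) (lt_irrefl _)
    calc (F.filter fun x => lab x < lab g).card
        ≤ ((F.filter fun x => lab x < lab h).erase g).card := Finset.card_le_card hsub
      _ < (F.filter fun x => lab x < lab h).card := Finset.card_erase_lt_of_mem hgmem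
  have hrk_inj : ∀ Z (hZS : Z ∈ S), ∀ g ∈ Z, ∀ h ∈ Z, rk g = rk h → g = h := by
    intro Z hZS g hg h hh hrkeq
    rcases lt_trichotomy (lab g) (lab h) with hl | hl | hl
    · exact absurd hrkeq (hrk_mono Z hZS g hg h hh hl).ne
    · exact hlabinj Z (hSC hZS) g hg h hh hl
    · exact absurd hrkeq.symm (hrk_mono Z hZS h hh g hg hl).ne
  have hrk_surj : ∀ Z (hZS : Z ∈ S), ∀ j < (hSfin Z hZS).toFinset.card,
      ∃ g ∈ Z, rk g = j := by
    intro Z hZS j hj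
    set F := (hSfin Z hZS).toFinset with hF
    have himg : F.image rk ⊆ Finset.range F.card := by
      intro x hx
      obtain ⟨g, hgF, rfl⟩ := Finset.mem_image.mp hx
      exact Finset.mem_range.mpr (hrk_lt Z hZS g ((Set.Finite.mem_toFinset _).1 hgF))
    have hcard : (F.image rk).card = F.card := by
      rw [Finset.card_image_of_injOn]
      intro a ha b hb hab
      exact hrk_inj Z hZS a ((Set.Finite.mem_toFinset _).1 ha)
        b ((Set.Finite.mem_toFinset _).1 hb) hab
    have heq : F.image rk = Finset.range F.card :=
      Finset.eq_of_subset_of_card_le himg (by rw [hcard, Finset.card_range])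
    have : j ∈ F.image rk := by rw [heq]; exact Finset.mem_range.mpr hj
    obtain ⟨g, hgF, hgj⟩ := Finset.mem_image.mp this
    exact ⟨g, (Set.Finite.mem_toFinset _).1 hgF, hgj⟩
  refine ⟨τ, ?_, ?_, ?_, ?_⟩
  · -- injectivity of each τ g
    intro g m n hmn
    by_cases hS : Zc g ∈ S
    · have hc : 0 < (hSfin _ hS).toFinset.card := by
        rw [Finset.card_pos, Set.Finite.toFinset_nonempty]
        exact hC1 _ (hZcC g)
      rw [hτ] at hmn; simp only at hmn; rw [dif_pos hS] at hmn
      have := Nat.add_right_cancel hmn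
      exact Nat.eq_of_mul_eq_mul_right hc this
    · rw [hτ] at hmn; simp only at hmn; rw [dif_neg hS] at hmn
      exact (Nat.pair_eq_pair.mp hmn).2
  · -- disjoint ranges within a C-set
    intro Z hZC g hg h hh hgh m n hmn
    by_cases hS : Z ∈ S
    · rw [(hτS Z hS g hg).2, (hτS Z hS h hh).2] at hmn
      have h1 : rk g = rk h := by
        have := congrArg (fun x => x % (hSfin Z hS).toFinset.card) hmn
        simpa [Nat.mul_add_mod', Nat.mod_eq_of_lt (hrk_lt Z hS g hg),
          Nat.mod_eq_of_lt (hrk_lt Z hS h hh)] using this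
      exact hgh (hrk_inj Z hS g hg h hh h1)
    · rw [hτnS Z hZC hS g hg, hτnS Z hZC hS h hh] at hmn
      exact hgh (hlabinj Z hZC g hg h hh (Nat.pair_eq_pair.mp hmn).1)
  · -- covering for S-sets
    intro Z hZS m
    set k := (hSfin Z hZS).toFinset.card with hk
    have hc : 0 < k := by
      rw [hk, Finset.card_pos, Set.Finite.toFinset_nonempty]
      exact hC1 _ (hSC hZS)
    obtain ⟨g, hgZ, hgj⟩ := hrk_surj Z hZS (m % k) (Nat.mod_lt _ hc)
    refine ⟨g, hgZ, m / k, ?_⟩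
    rw [(hτS Z hZS g hgZ).2, hgj, ← hk]
    rw [Nat.mul_comm]
    exact Nat.div_add_mod m k
  · -- τ e 0 = τ f 0
    have hlab_e : lab e = 0 := by rw [hlab]; simp
    have hlab_f : lab f = 0 := by rw [hlab]; simp
    have key : ∀ (g : E) (W : Set E), W ∈ C → g ∈ W → lab g = 0 → τ g 0 = 0 := by
      intro g W hWC hgW hg0
      by_cases hS : W ∈ S
      · rw [(hτS W hS g hgW).2, (hτS W hS g hgW).1, hg0]
        rw [Finset.filter_false_of_mem (fun x _ => Nat.not_lt_zero _)]
        simp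
      · rw [hτnS W hWC hS g hgW, hg0]
        rfl
    rw [key e X hX he hlab_e, key f Y hY hf hlab_f]

/-- In `L_K(E,C,S)` of a countable separated graph, for edges `e ∈ X`,
`f ∈ Y` with `X, Y ∈ C_v` distinct, one has `e* f ≠ 0`. -/
theorem cohnLeavitt_ghost_mul_edge_ne_zero
    (K V E : Type) [Field K] [Countable V] [Countable E] (r s : E → V)
    (C : Set (Set E))
    (hC1 : ∀ Y ∈ C, Y.Nonempty)
    (hC2 : ∀ Y ∈ C, ∀ e ∈ Y, ∀ f ∈ Y, s e = s f)
    (hC3 : ∀ Y ∈ C, ∀ Z ∈ C, Y ≠ Z → Disjoint Y Z)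
    (hC4 : ∀ e : E, ∃ Y ∈ C, e ∈ Y)
    (S : Set (Set E)) (hSC : S ⊆ C) (hSfin : ∀ X ∈ S, X.Finite)
    (X Y : Set E) (hX : X ∈ C) (hY : Y ∈ C) (hXY : X ≠ Y)
    (e f : E) (he : e ∈ X) (hf : f ∈ Y) (hsame : s e = s f) :
    clMk K V E r s C S hSfin (CLGen.ghost e) *
      clMk K V E r s C S hSfin (CLGen.edge f) ≠ 0 := by
  obtain ⟨τ, hinj, hdisj, hcover, h0⟩ :=
    CL12.exists_tau C hC1 hC3 hC4 S hSC hSfin X Y hX hY hXY e f he hf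
  exact CL12.main_aux K V E r s C S hSC hSfin τ hinj hdisj hcover e f hsame h0
end

section
/- In L_K(E,C,S) for a countable separated graph, for every finite set X ∈ C_v \ S, the element Σ_{e∈X} ee* satisfies (Σ_{e∈X} ee*)·v = Σ_{e∈X} ee* = v·(Σ_{e∈X} ee*), but Σ_{e∈X} ee* ≠ v. -/
section Rep
variable (K V E : Type) [Field K] (r s : E → V) (j : E → ℕ → ℕ)

open Classical in
noncomputable def clRepGen : CLGen V E → Module.End K ((V × ℕ) →₀ K)
  | .vert u => Finsupp.lift _ K _ (fun p => if p.1 = u then Finsupp.single p (1:K) else 0)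
  | .edge e => Finsupp.lift _ K _ (fun p => if p.1 = r e then Finsupp.single (s e, j e p.2) (1:K) else 0)
  | .ghost e => Finsupp.lift _ K _ (fun p =>
      if h : p.1 = s e ∧ ∃ n, j e n = p.2 then Finsupp.single ((r e, h.2.choose) : V × ℕ) (1:K) else 0)

lemma clLift_single (f : V × ℕ → ((V × ℕ) →₀ K)) (p : V × ℕ) (c : K) :
    Finsupp.lift ((V × ℕ) →₀ K) K (V × ℕ) f (Finsupp.single p c) = c • f p := by
  simp [Finsupp.lift_apply, Finsupp.sum_single_index]

lemma rep_vert_pos (u : V) (n : ℕ) (c : K) :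
    clRepGen K V E r s j (.vert u) (Finsupp.single ((u, n) : V × ℕ) c)
      = Finsupp.single ((u, n) : V × ℕ) c := by
  simp [clRepGen, clLift_single]

lemma rep_vert_neg (u u1 : V) (n : ℕ) (c : K) (hp : u1 ≠ u) :
    clRepGen K V E r s j (.vert u) (Finsupp.single ((u1, n) : V × ℕ) c) = 0 := by
  simp [clRepGen, clLift_single, hp]

lemma rep_edge_pos (e : E) (n : ℕ) (c : K) :
    clRepGen K V E r s j (.edge e) (Finsupp.single ((r e, n) : V × ℕ) c)
      = Finsupp.single ((s e, j e n) : V × ℕ) c := by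
  simp [clRepGen, clLift_single]

lemma rep_edge_neg (e : E) (u1 : V) (n : ℕ) (c : K) (hp : u1 ≠ r e) :
    clRepGen K V E r s j (.edge e) (Finsupp.single ((u1, n) : V × ℕ) c) = 0 := by
  simp [clRepGen, clLift_single, hp]

lemma rep_ghost_pos (e : E) (hinj : ∀ n m, j e n = j e m → n = m) (n : ℕ) (c : K) :
    clRepGen K V E r s j (.ghost e) (Finsupp.single ((s e, j e n) : V × ℕ) c)
      = Finsupp.single ((r e, n) : V × ℕ) c := by
  have hcond : ((s e, j e n) : V × ℕ).1 = s e ∧ ∃ m, j e m = ((s e, j e n) : V × ℕ).2 :=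
    ⟨rfl, n, rfl⟩
  simp only [clRepGen, clLift_single]
  rw [dif_pos hcond, hinj _ _ hcond.2.choose_spec]
  simp

lemma rep_ghost_neg (e : E) (u1 : V) (n : ℕ) (c : K)
    (hp : ¬(u1 = s e ∧ ∃ k, j e k = n)) :
    clRepGen K V E r s j (.ghost e) (Finsupp.single ((u1, n) : V × ℕ) c) = 0 := by
  simp only [clRepGen, clLift_single]
  rw [dif_neg hp]
  simp

end Rep

theorem buildJ (E : Type) [Countable E] (C S : Set (Set E))
    (hC1 : ∀ Y ∈ C, Y.Nonempty)
    (hC3 : ∀ Y ∈ C, ∀ Z ∈ C, Y ≠ Z → Disjoint Y Z)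
    (hC4 : ∀ e : E, ∃ Y ∈ C, e ∈ Y) :
    ∃ j : E → ℕ → ℕ,
      (∀ Y ∈ C, ∀ e ∈ Y, ∀ f ∈ Y, ∀ n m, j e n = j f m → e = f ∧ n = m) ∧
      (S ⊆ C → ∀ X' ∈ S, ∀ k : ℕ, ∃ e ∈ X', ∃ n, j e n = k) ∧
      (∀ X ∈ C, X ∉ S → ∀ e ∈ X, ∀ n, j e n ≠ 0) := by
  classical
  have hmaps : ∀ Y : Set E, Y ∈ C → ∃ g : E → ℕ → ℕ,
      (∀ e ∈ Y, ∀ f ∈ Y, ∀ n m, g e n = g f m → e = f ∧ n = m) ∧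
      (Y ∈ S → ∀ k : ℕ, ∃ e ∈ Y, ∃ n, g e n = k) ∧
      (Y ∉ S → ∀ e ∈ Y, ∀ n, g e n ≠ 0) := by
    intro Y hY
    haveI : Countable ↥Y := (Set.to_countable Y).to_subtype
    by_cases hYS : Y ∈ S
    · obtain ⟨e₀, he₀⟩ := hC1 Y hY
      haveI : Nonempty ↥Y := ⟨⟨e₀, he₀⟩⟩
      haveI : Infinite (↥Y × ℕ) := inferInstance
      obtain ⟨d⟩ := (nonempty_denumerable_iff (α := ↥Y × ℕ)).mpr ⟨inferInstance, inferInstance⟩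
      let q : ↥Y × ℕ ≃ ℕ := @Denumerable.eqv _ d
      refine ⟨fun e n => if h : e ∈ Y then q (⟨e, h⟩, n) else 0, ?_, ?_, ?_⟩
      · intro e he f hf n m hg
        simp only [dif_pos he, dif_pos hf] at hg
        have := q.injective hg
        rw [Prod.mk.injEq, Subtype.mk.injEq] at this
        exact this
      · intro _ k
        obtain ⟨⟨⟨e, he⟩, n⟩, hq⟩ := q.surjective k
        exact ⟨e, he, n, by simp only [dif_pos he]; exact hq⟩
      · intro h; exact absurd hYS h
    · obtain ⟨f, hf⟩ := Countable.exists_injective_nat (↥Y × ℕ)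
      refine ⟨fun e n => if h : e ∈ Y then f (⟨e, h⟩, n) + 1 else 0, ?_, ?_, ?_⟩
      · intro e he f' hf' n m hg
        simp only [dif_pos he, dif_pos hf'] at hg
        have := hf (Nat.succ_injective hg)
        rw [Prod.mk.injEq, Subtype.mk.injEq] at this
        exact this
      · intro h; exact absurd h hYS
      · intro _ e he n
        simp only [dif_pos he]
        exact Nat.succ_ne_zero _
  choose G hG1 hG2 hG3 using hmaps
  choose Ye hYC hYe using hC4
  have hYuniq : ∀ Y ∈ C, ∀ e ∈ Y, Ye e = Y := by
    intro Y hY e he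
    by_contra hne
    exact Set.disjoint_left.mp (hC3 (Ye e) (hYC e) Y hY hne) (hYe e) he
  let G' : Set E → E → ℕ → ℕ := fun Y => if h : Y ∈ C then G Y h else fun _ _ => 0
  refine ⟨fun e => G' (Ye e) e, ?_, ?_, ?_⟩
  · intro Y hY e he f hf n m h
    simp only [hYuniq Y hY e he, hYuniq Y hY f hf] at h
    simp only [G', dif_pos hY] at h
    exact hG1 Y hY e he f hf n m h
  · intro hSC X' hX' k
    obtain ⟨e, he, n, hn⟩ := hG2 X' (hSC hX') hX' k
    refine ⟨e, he, n, ?_⟩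
    simp only [hYuniq X' (hSC hX') e he, G', dif_pos (hSC hX')]
    exact hn
  · intro X hX hXS e he n
    simp only [hYuniq X hX e he, G', dif_pos hX]
    exact hG3 X hX hXS e he n

theorem clRep_rel (K V E : Type) [Field K] (r s : E → V) (j : E → ℕ → ℕ)
    (C S : Set (Set E)) (hSfin : ∀ X ∈ S, X.Finite)
    (hSC : S ⊆ C)
    (hC2 : ∀ Y ∈ C, ∀ e ∈ Y, ∀ f ∈ Y, s e = s f)
    (hj1 : ∀ Y ∈ C, ∀ e ∈ Y, ∀ f ∈ Y, ∀ n m, j e n = j f m → e = f ∧ n = m)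
    (hjE : ∀ e : E, ∃ Y ∈ C, e ∈ Y)
    (hj2 : ∀ X' ∈ S, ∀ k : ℕ, ∃ e ∈ X', ∃ n, j e n = k)
    {x y : FreeAlgebra K (CLGen V E)} (h : CLRel K V E r s C S hSfin x y) :
    FreeAlgebra.lift K (clRepGen K V E r s j) x
      = FreeAlgebra.lift K (clRepGen K V E r s j) y := by
  have hinj : ∀ e : E, ∀ n m, j e n = j e m → n = m := by
    intro e n m h
    obtain ⟨Y, hY, he⟩ := hjE e
    exact (hj1 Y hY e he e he n m h).2
  induction h with
  | vert_idem u =>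
      refine Finsupp.lhom_ext fun p c => ?_
      obtain ⟨u1, m⟩ := p
      simp only [map_mul, Module.End.mul_apply, FreeAlgebra.lift_ι_apply]
      by_cases hp : u1 = u
      · subst hp
        rw [rep_vert_pos, rep_vert_pos]
      · rw [rep_vert_neg _ _ _ _ _ _ _ _ _ _ hp, map_zero]
  | vert_orth u v huv =>
      refine Finsupp.lhom_ext fun p c => ?_
      obtain ⟨u1, m⟩ := p
      simp only [map_mul, Module.End.mul_apply, FreeAlgebra.lift_ι_apply, map_zero,
        LinearMap.zero_apply]
      by_cases hp : u1 = v
      · subst hp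
        rw [rep_vert_pos, rep_vert_neg _ _ _ _ _ _ _ _ _ _ (Ne.symm huv)]
      · rw [rep_vert_neg _ _ _ _ _ _ _ _ _ _ hp, map_zero]
  | e1l e =>
      refine Finsupp.lhom_ext fun p c => ?_
      obtain ⟨u1, m⟩ := p
      simp only [map_mul, Module.End.mul_apply, FreeAlgebra.lift_ι_apply]
      by_cases hp : u1 = r e
      · subst hp
        rw [rep_edge_pos, rep_vert_pos]
      · rw [rep_edge_neg _ _ _ _ _ _ _ _ _ _ hp, map_zero]
  | e1r e =>
      refine Finsupp.lhom_ext fun p c => ?_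
      obtain ⟨u1, m⟩ := p
      simp only [map_mul, Module.End.mul_apply, FreeAlgebra.lift_ι_apply]
      by_cases hp : u1 = r e
      · subst hp
        rw [rep_vert_pos]
      · rw [rep_vert_neg _ _ _ _ _ _ _ _ _ _ hp, map_zero,
          rep_edge_neg _ _ _ _ _ _ _ _ _ _ hp]
  | e2l e =>
      refine Finsupp.lhom_ext fun p c => ?_
      obtain ⟨u1, m⟩ := p
      simp only [map_mul, Module.End.mul_apply, FreeAlgebra.lift_ι_apply]
      by_cases hcond : u1 = s e ∧ ∃ n, j e n = m
      · obtain ⟨h1, n, hn⟩ := hcond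
        subst h1
        rw [← hn, rep_ghost_pos _ _ _ _ _ _ _ (hinj e), rep_vert_pos]
      · rw [rep_ghost_neg _ _ _ _ _ _ _ _ _ _ hcond, map_zero]
  | e2r e =>
      refine Finsupp.lhom_ext fun p c => ?_
      obtain ⟨u1, m⟩ := p
      simp only [map_mul, Module.End.mul_apply, FreeAlgebra.lift_ι_apply]
      by_cases hp : u1 = s e
      · subst hp
        rw [rep_vert_pos]
      · rw [rep_vert_neg _ _ _ _ _ _ _ _ _ _ hp, map_zero,
          rep_ghost_neg _ _ _ _ _ _ _ _ _ _ (fun h' => hp h'.1)]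
  | sck1_same Y hY e he =>
      refine Finsupp.lhom_ext fun p c => ?_
      obtain ⟨u1, m⟩ := p
      simp only [map_mul, Module.End.mul_apply, FreeAlgebra.lift_ι_apply]
      by_cases hp : u1 = r e
      · subst hp
        rw [rep_edge_pos, rep_ghost_pos _ _ _ _ _ _ _ (hinj e), rep_vert_pos]
      · rw [rep_edge_neg _ _ _ _ _ _ _ _ _ _ hp, map_zero,
          rep_vert_neg _ _ _ _ _ _ _ _ _ _ hp]
  | sck1_diff Y hY e f he hf hef =>
      refine Finsupp.lhom_ext fun p c => ?_
      obtain ⟨u1, m⟩ := p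
      simp only [map_mul, Module.End.mul_apply, FreeAlgebra.lift_ι_apply, map_zero,
        LinearMap.zero_apply]
      by_cases hp : u1 = r f
      · subst hp
        rw [rep_edge_pos, rep_ghost_neg]
        rintro ⟨h1, n, hn⟩
        exact hef (hj1 Y hY e he f hf n m hn).1
      · rw [rep_edge_neg _ _ _ _ _ _ _ _ _ _ hp, map_zero]
  | sck2 X' hX' v₀ hne hv =>
      refine Finsupp.lhom_ext fun p c => ?_
      obtain ⟨u1, m⟩ := p
      simp only [map_sum, map_mul, LinearMap.sum_apply, Module.End.mul_apply,
        FreeAlgebra.lift_ι_apply]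
      by_cases hp : u1 = v₀
      · subst hp
        obtain ⟨e₀, he₀, n₀, hn₀⟩ := hj2 X' hX' m
        rw [rep_vert_pos]
        rw [Finset.sum_eq_single_of_mem e₀ ((hSfin X' hX').mem_toFinset.mpr he₀)]
        · have h1 : ((u1, m) : V × ℕ) = ((s e₀, j e₀ n₀) : V × ℕ) := by
            rw [hv e₀ he₀, hn₀]
          rw [h1, rep_ghost_pos _ _ _ _ _ _ _ (hinj e₀), rep_edge_pos]
        · intro e heT hee₀
          have he : e ∈ X' := (hSfin X' hX').mem_toFinset.mp heT
          rw [rep_ghost_neg, map_zero]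
          rintro ⟨h1, n, hn⟩
          exact hee₀ (hj1 X' (hSC hX') e he e₀ he₀ n n₀ (hn.trans hn₀.symm)).1
      · rw [rep_vert_neg _ _ _ _ _ _ _ _ _ _ hp]
        refine (Finset.sum_eq_zero fun e heT => ?_).symm
        have he : e ∈ X' := (hSfin X' hX').mem_toFinset.mp heT
        rw [rep_ghost_neg, map_zero]
        rintro ⟨h1, _⟩
        exact hp (h1.trans (hv e he))

/-- In `L_K(E,C,S)` of a countable separated graph, for any finite
`X ∈ C_v \ S`, the element `a = Σ_{e∈X} e e*` satisfies `a·v = a = v·a` but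
`a ≠ v`. -/
theorem cohnLeavitt_sum_lt_vertex
    (K V E : Type) [Field K] [Countable V] [Countable E] (r s : E → V)
    (C : Set (Set E))
    (hC1 : ∀ Y ∈ C, Y.Nonempty)
    (hC2 : ∀ Y ∈ C, ∀ e ∈ Y, ∀ f ∈ Y, s e = s f)
    (hC3 : ∀ Y ∈ C, ∀ Z ∈ C, Y ≠ Z → Disjoint Y Z)
    (hC4 : ∀ e : E, ∃ Y ∈ C, e ∈ Y)
    (S : Set (Set E)) (hSC : S ⊆ C) (hSfin : ∀ X ∈ S, X.Finite)
    (X : Set E) (hX : X ∈ C) (hXS : X ∉ S) (hXfin : X.Finite)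
    (v : V) (hv : ∀ e ∈ X, s e = v) :
    (∑ e ∈ hXfin.toFinset,
        clMk K V E r s C S hSfin (CLGen.edge e) *
          clMk K V E r s C S hSfin (CLGen.ghost e)) *
        clMk K V E r s C S hSfin (CLGen.vert v) =
      (∑ e ∈ hXfin.toFinset,
        clMk K V E r s C S hSfin (CLGen.edge e) *
          clMk K V E r s C S hSfin (CLGen.ghost e)) ∧
    clMk K V E r s C S hSfin (CLGen.vert v) *
      (∑ e ∈ hXfin.toFinset,
        clMk K V E r s C S hSfin (CLGen.edge e) *
          clMk K V E r s C S hSfin (CLGen.ghost e)) =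
      (∑ e ∈ hXfin.toFinset,
        clMk K V E r s C S hSfin (CLGen.edge e) *
          clMk K V E r s C S hSfin (CLGen.ghost e)) ∧
    (∑ e ∈ hXfin.toFinset,
        clMk K V E r s C S hSfin (CLGen.edge e) *
          clMk K V E r s C S hSfin (CLGen.ghost e)) ≠
      clMk K V E r s C S hSfin (CLGen.vert v) := by
    classical
  have key2r : ∀ e ∈ X, clMk K V E r s C S hSfin (CLGen.ghost e) *
      clMk K V E r s C S hSfin (CLGen.vert v) = clMk K V E r s C S hSfin (CLGen.ghost e) := by
    intro e he
    have h := RingQuot.mkAlgHom_rel K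
      (CLRel.e2r (K := K) (V := V) (E := E) (r := r) (s := s) (C := C) (S := S)
        (hSfin := hSfin) e)
    rw [map_mul, hv e he] at h
    exact h
  have key1l : ∀ e ∈ X, clMk K V E r s C S hSfin (CLGen.vert v) *
      clMk K V E r s C S hSfin (CLGen.edge e) = clMk K V E r s C S hSfin (CLGen.edge e) := by
    intro e he
    have h := RingQuot.mkAlgHom_rel K
      (CLRel.e1l (K := K) (V := V) (E := E) (r := r) (s := s) (C := C) (S := S)
        (hSfin := hSfin) e)
    rw [map_mul, hv e he] at h
    exact h
  refine ⟨?_, ?_, ?_⟩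
  · rw [Finset.sum_mul]
    refine Finset.sum_congr rfl fun e he => ?_
    rw [mul_assoc, key2r e (hXfin.mem_toFinset.mp he)]
  · rw [Finset.mul_sum]
    refine Finset.sum_congr rfl fun e he => ?_
    rw [← mul_assoc, key1l e (hXfin.mem_toFinset.mp he)]
  · obtain ⟨j, hj1, hj2', hj3⟩ := buildJ E C S hC1 hC3 hC4
    have hj2 := hj2' hSC
    set Φ : FreeAlgebra K (CLGen V E) →ₐ[K] Module.End K ((V × ℕ) →₀ K) :=
      FreeAlgebra.lift K (clRepGen K V E r s j) with hΦ
    have hrel : ∀ ⦃x y⦄, CLRel K V E r s C S hSfin x y → Φ x = Φ y :=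
      fun x y h => clRep_rel K V E r s j C S hSfin hSC hC2 hj1 hC4 hj2 h
    set Ψ := RingQuot.liftAlgHom K ⟨Φ, hrel⟩ with hΨ
    intro heq
    have happ : ∀ g, Ψ (clMk K V E r s C S hSfin g) = clRepGen K V E r s j g := by
      intro g
      simp only [clMk, hΨ, RingQuot.liftAlgHom_mkAlgHom_apply, hΦ, FreeAlgebra.lift_ι_apply]
    have h2 := congrArg Ψ heq
    rw [map_sum] at h2
    simp only [map_mul, happ] at h2
    have h3 := LinearMap.congr_fun h2 (Finsupp.single ((v, 0) : V × ℕ) (1 : K))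
    rw [rep_vert_pos] at h3
    rw [LinearMap.sum_apply] at h3
    have hzero : ∀ e ∈ hXfin.toFinset,
        (clRepGen K V E r s j (CLGen.edge e) * clRepGen K V E r s j (CLGen.ghost e))
          (Finsupp.single ((v, 0) : V × ℕ) (1 : K)) = 0 := by
      intro e heT
      have he := hXfin.mem_toFinset.mp heT
      rw [Module.End.mul_apply, rep_ghost_neg, map_zero]
      rintro ⟨-, k, hk⟩
      exact hj3 X hX hXS e he k hk
    rw [Finset.sum_congr rfl hzero, Finset.sum_const_zero] at h3
    exact one_ne_zero (Finsupp.single_eq_zero.mp h3.symm)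
end

section
/- In L_K(E,C,S) for a countable separated graph, for distinct finite sets X, Y ∈ C \ S, one has Σ_{e∈X} ee* ≠ Σ_{f∈Y} ff*. -/
/-! ### Auxiliary representation -/

namespace CLAux

open Finsupp

open scoped Classical

variable {K V E : Type} [Field K]

/-- Action of a generator on the basis `V × ℕ` of the representation space. -/
noncomputable def clF (r s : E → V) (φ : E → ℕ → ℕ) (ψ : E → ℕ → Option ℕ) :
    CLGen V E → (V × ℕ) → ((V × ℕ) →₀ K)
  | .vert v => fun p => if p.1 = v then single p 1 else 0
  | .edge e => fun p => if p.1 = r e then single (s e, φ e p.2) 1 else 0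
  | .ghost e => fun p =>
      if p.1 = s e then ((ψ e p.2).elim 0 fun m => single (r e, m) 1) else 0

/-- The representation of a generator as an endomorphism. -/
noncomputable def clRep (r s : E → V) (φ : E → ℕ → ℕ) (ψ : E → ℕ → Option ℕ)
    (g : CLGen V E) : Module.End K ((V × ℕ) →₀ K) :=
  Finsupp.linearCombination K (clF r s φ ψ g)

lemma clRep_single (r s : E → V) (φ : E → ℕ → ℕ) (ψ : E → ℕ → Option ℕ)
    (g : CLGen V E) (p : V × ℕ) (c : K) :
    clRep r s φ ψ g (single p c) = c • clF (K := K) r s φ ψ g p := by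
  simp [clRep]

/-- Key computation for `e e*` applied to a basis vector. -/
lemma clRep_eg (r s : E → V) (φ : E → ℕ → ℕ) (ψ : E → ℕ → Option ℕ)
    (h2 : ∀ e m n, ψ e n = some m → φ e m = n)
    (e : E) (w : V) (n : ℕ) (c : K) :
    clRep r s φ ψ (CLGen.edge e) (clRep r s φ ψ (CLGen.ghost e) (single (w, n) c)) =
      if w = s e ∧ (ψ e n).isSome then single (w, n) c else 0 := by
  rw [clRep_single]
  by_cases hw : w = s e
  · rcases hψ : ψ e n with _ | m
    · simp [clF, hw, hψ]
    · have hφ : φ e m = n := h2 e m n hψ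
      rw [if_pos ⟨hw, rfl⟩]
      subst hw
      simp [clF, hψ, clRep_single, hφ, Finsupp.smul_single_one]
  · simp [clF, hw]

/-- Compatibility of the representation with the defining relations. -/
lemma clRep_compat (r s : E → V) (C S : Set (Set E)) (hSfin : ∀ X ∈ S, X.Finite)
    (hC2 : ∀ Z ∈ C, ∀ e ∈ Z, ∀ f ∈ Z, s e = s f)
    (hSC : S ⊆ C)
    (φ : E → ℕ → ℕ) (ψ : E → ℕ → Option ℕ)
    (h1 : ∀ e n, ψ e (φ e n) = some n)
    (h2 : ∀ e m n, ψ e n = some m → φ e m = n)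
    (h3 : ∀ Z ∈ C, ∀ e ∈ Z, ∀ f ∈ Z, e ≠ f → ∀ n, ψ e (φ f n) = none)
    (h4 : ∀ Z ∈ S, ∀ n, ∃ e ∈ Z, (ψ e n).isSome)
    ⦃a b : FreeAlgebra K (CLGen V E)⦄ (hab : CLRel K V E r s C S hSfin a b) :
    FreeAlgebra.lift K (clRep (K := K) r s φ ψ) a
      = FreeAlgebra.lift K (clRep (K := K) r s φ ψ) b := by
  induction hab with
  | vert_idem v =>
      simp only [map_mul, FreeAlgebra.lift_ι_apply]
      refine Finsupp.lhom_ext fun p c => ?_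
      obtain ⟨w, n⟩ := p
      rw [Module.End.mul_apply, clRep_single]
      by_cases hw : w = v <;>
        simp [clF, hw, clRep_single]
  | vert_orth u v huv =>
      simp only [map_mul, FreeAlgebra.lift_ι_apply, map_zero]
      refine Finsupp.lhom_ext fun p c => ?_
      obtain ⟨w, n⟩ := p
      rw [Module.End.mul_apply, clRep_single]
      by_cases hw : w = v
      · subst hw
        simp [clF, clRep_single, huv.symm]
      · simp [clF, hw]
  | e1l e =>
      simp only [map_mul, FreeAlgebra.lift_ι_apply]
      refine Finsupp.lhom_ext fun p c => ?_
      obtain ⟨w, n⟩ := p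
      rw [Module.End.mul_apply, clRep_single]
      by_cases hw : w = r e <;>
        simp [clF, hw, clRep_single]
  | e1r e =>
      simp only [map_mul, FreeAlgebra.lift_ι_apply]
      refine Finsupp.lhom_ext fun p c => ?_
      obtain ⟨w, n⟩ := p
      rw [Module.End.mul_apply, clRep_single, clRep_single]
      by_cases hw : w = r e <;>
        simp [clF, hw, clRep_single]
  | e2l e =>
      simp only [map_mul, FreeAlgebra.lift_ι_apply]
      refine Finsupp.lhom_ext fun p c => ?_
      obtain ⟨w, n⟩ := p
      rw [Module.End.mul_apply, clRep_single]
      by_cases hw : w = s e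
      · rcases hψ : ψ e n with _ | m <;>
          simp [clF, hw, hψ, clRep_single]
      · simp [clF, hw]
  | e2r e =>
      simp only [map_mul, FreeAlgebra.lift_ι_apply]
      refine Finsupp.lhom_ext fun p c => ?_
      obtain ⟨w, n⟩ := p
      rw [Module.End.mul_apply, clRep_single, clRep_single]
      by_cases hw : w = s e <;>
        simp [clF, hw, clRep_single]
  | sck1_same Z hZ e he =>
      simp only [map_mul, FreeAlgebra.lift_ι_apply]
      refine Finsupp.lhom_ext fun p c => ?_
      obtain ⟨w, n⟩ := p
      rw [Module.End.mul_apply, clRep_single, clRep_single]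
      by_cases hw : w = r e
      · simp [clF, hw, clRep_single, h1 e n]
      · simp [clF, hw]
  | sck1_diff Z hZ e f he hf hef =>
      simp only [map_mul, FreeAlgebra.lift_ι_apply, map_zero]
      refine Finsupp.lhom_ext fun p c => ?_
      obtain ⟨w, n⟩ := p
      rw [Module.End.mul_apply, clRep_single]
      by_cases hw : w = r f
      · have hsf : s f = s e := hC2 Z hZ f hf e he
        simp [clF, hw, clRep_single, hsf, h3 Z hZ e he f hf hef n]
      · simp [clF, hw]
  | sck2 Z hZ v hne hv =>
      simp only [map_sum, map_mul, FreeAlgebra.lift_ι_apply]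
      refine Finsupp.lhom_ext fun p c => ?_
      obtain ⟨w, n⟩ := p
      rw [clRep_single, LinearMap.sum_apply,
        Finset.sum_congr rfl (fun e _ =>
          (Module.End.mul_apply _ _ _).trans (clRep_eg r s φ ψ h2 e w n c))]
      by_cases hw : w = v
      · subst hw
        obtain ⟨e₀, he₀Z, he₀⟩ := h4 Z hZ n
        rw [Finset.sum_eq_single e₀]
        · simp [clF, (hv e₀ he₀Z).symm, he₀, Finsupp.smul_single_one]
        · intro f hf hfe
          rw [Set.Finite.mem_toFinset] at hf
          rw [if_neg]
          rintro ⟨-, hsome⟩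
          rw [Option.isSome_iff_exists] at hsome
          obtain ⟨m, hm⟩ := hsome
          have hφ := h2 f m n hm
          have h0 := h3 Z (hSC hZ) e₀ he₀Z f hf (fun h => hfe h.symm) m
          rw [hφ] at h0
          rw [h0] at he₀
          simp at he₀
        · intro hne'
          exact absurd (Set.Finite.mem_toFinset _ |>.mpr he₀Z) hne'
      · have hzero : ∀ f ∈ (hSfin Z hZ).toFinset,
            (if w = s f ∧ (ψ f n).isSome
              then Finsupp.single ((w, n) : V × ℕ) c else (0 : (V × ℕ) →₀ K)) = 0 := by
          intro f hf
          rw [Set.Finite.mem_toFinset] at hf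
          rw [if_neg]
          rintro ⟨hws, -⟩
          exact hw (hws.trans (hv f hf))
        rw [Finset.sum_eq_zero hzero]
        simp [clF, hw]

/-- Existence of the combinatorial data used to build the representation. -/
lemma exists_clData (E : Type) [Countable E] (C : Set (Set E))
    (hC1 : ∀ Z ∈ C, Z.Nonempty)
    (hC3 : ∀ Z ∈ C, ∀ W ∈ C, Z ≠ W → Disjoint Z W)
    (hC4 : ∀ e : E, ∃ Z ∈ C, e ∈ Z)
    (S : Set (Set E)) (hSC : S ⊆ C) (hSfin : ∀ W ∈ S, W.Finite)
    (X : Set E) (hX : X ∈ C) (hXS : X ∉ S)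
    (Y : Set E) (hY : Y ∈ C) (hYfin : Y.Finite) (hXY : X ≠ Y) :
    ∃ (φ : E → ℕ → ℕ) (ψ : E → ℕ → Option ℕ),
      (∀ e n, ψ e (φ e n) = some n) ∧
      (∀ e m n, ψ e n = some m → φ e m = n) ∧
      (∀ Z ∈ C, ∀ e ∈ Z, ∀ f ∈ Z, e ≠ f → ∀ n, ψ e (φ f n) = none) ∧
      (∀ Z ∈ S, ∀ n, ∃ e ∈ Z, (ψ e n).isSome) ∧
      (∃ f ∈ Y, (ψ f 0).isSome) ∧
      (∀ e ∈ X, ψ e 0 = none) := by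
  classical
  have hEne : Nonempty E := ⟨(hC1 Y hY).choose⟩
  obtain ⟨θ, θinj⟩ := Countable.exists_injective_nat (E × ℕ)
  -- the unique set of C containing a given edge
  let Z : E → Set E := fun e => (hC4 e).choose
  have hZC : ∀ e, Z e ∈ C := fun e => (hC4 e).choose_spec.1
  have heZ : ∀ e, e ∈ Z e := fun e => (hC4 e).choose_spec.2
  have Zuniq : ∀ (e : E) (W : Set E), W ∈ C → e ∈ W → W = Z e := by
    intro e W hW heW
    by_contra hne
    exact Set.disjoint_left.1 (hC3 W hW (Z e) (hZC e) hne) heW (heZ e)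
  -- special sets: those in S, together with Y
  set Spc : Set E → Prop := fun W => W ∈ S ∨ W = Y with hSpc
  -- for each special set pick a pairing with ℕ
  have hbex : ∀ W : Set E, ∃ (b : E × ℕ → ℕ) (binv : ℕ → E × ℕ),
      Spc W → ((∀ p : E × ℕ, p.1 ∈ W → binv (b p) = p) ∧
        (∀ m, (binv m).1 ∈ W ∧ b (binv m) = m)) := by
    intro W
    by_cases hW : Spc W
    · have hWfin : W.Finite := by
        rcases hW with h | h
        · exact hSfin W h
        · exact h ▸ hYfin
      have hWne : W.Nonempty := by
        rcases hW with h | h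
        · exact hC1 W (hSC h)
        · exact h ▸ hC1 Y hY
      haveI := hWne.to_subtype
      haveI : Countable W := Subtype.countable
      have : Nonempty ((W × ℕ) ≃ ℕ) := nonempty_equiv_of_countable
      obtain ⟨γ⟩ := this
      refine ⟨fun p => if h : p.1 ∈ W then γ (⟨p.1, h⟩, p.2) else 0,
        fun m => Prod.mk ((γ.symm m).1 : E) (γ.symm m).2, fun _ => ⟨?_, ?_⟩⟩
      · intro p hp
        simp only [dif_pos hp, Equiv.symm_apply_apply]
      · intro m
        have hmem : ((γ.symm m).1 : E) ∈ W := (γ.symm m).1.property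
        refine ⟨hmem, ?_⟩
        simp only [dif_pos hmem]
        have hsub : (⟨((γ.symm m).1 : E), hmem⟩ : W) = (γ.symm m).1 :=
          Subtype.ext rfl
        rw [hsub, Prod.mk.eta, Equiv.apply_symm_apply]
    · exact ⟨fun _ => 0, fun _ => (hEne.some, 0), fun h => absurd h hW⟩
  choose b binv hb using hbex
  refine ⟨fun e n => if h : Spc (Z e) then b (Z e) (e, n) else θ (e, n) + 1,
    fun e m => if h : Spc (Z e) then
      (if (binv (Z e) m).1 = e then some (binv (Z e) m).2 else none)
    else (if hm : ∃ n, θ (e, n) + 1 = m then some hm.choose else none),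
    ?_, ?_, ?_, ?_, ?_, ?_⟩
  · -- h1
    intro e n
    by_cases h : Spc (Z e)
    · have := (hb (Z e) h).1 (e, n) (heZ e)
      simp [h, this]
    · have hex : ∃ k, θ (e, k) + 1 = θ (e, n) + 1 := ⟨n, rfl⟩
      have hch : hex.choose = n := by
        have h1 := hex.choose_spec
        have h2 := θinj (Nat.succ_injective h1)
        exact (Prod.ext_iff.1 h2).2
      simp only [dif_neg h]
      rw [dif_pos hex]
      exact congrArg some hch
  · -- h2
    intro e m n hmn
    dsimp only at hmn ⊢
    by_cases h : Spc (Z e)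
    · rw [dif_pos h] at hmn
      by_cases hc : (binv (Z e) n).1 = e
      · rw [if_pos hc] at hmn
        have hm : m = (binv (Z e) n).2 := (Option.some.inj hmn).symm
        rw [dif_pos h]
        have : ((e : E), m) = binv (Z e) n := Prod.ext_iff.2 ⟨hc.symm, hm⟩
        rw [this]
        exact ((hb (Z e) h).2 n).2
      · rw [if_neg hc] at hmn; exact absurd hmn (by simp)
    · rw [dif_neg h] at hmn
      by_cases hex : ∃ k, θ (e, k) + 1 = n
      · rw [dif_pos hex] at hmn
        have hm : m = hex.choose := (Option.some.inj hmn).symm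
        rw [dif_neg h, hm]
        exact hex.choose_spec
      · rw [dif_neg hex] at hmn; exact absurd hmn (by simp)
  · -- h3
    intro W hW e heW f hfW hef n
    have hze : W = Z e := Zuniq e W hW heW
    have hzf : W = Z f := Zuniq f W hW hfW
    simp only [← hze, ← hzf]
    by_cases h : Spc W
    · rw [dif_pos h, dif_pos h]
      have := (hb W h).1 (f, n) hfW
      rw [this, if_neg hef.symm]
    · rw [dif_neg h, dif_neg]
      rintro ⟨k, hk⟩
      rw [dif_neg h] at hk
      have := θinj (Nat.succ_injective hk)
      exact hef (Prod.ext_iff.1 this).1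
  · -- h4
    intro W hW n
    have h : Spc W := Or.inl hW
    refine ⟨(binv W n).1, ((hb W h).2 n).1, ?_⟩
    have hze : W = Z (binv W n).1 := Zuniq _ W (hSC hW) ((hb W h).2 n).1
    simp only [← hze, dif_pos h]
    simp
  · -- h5
    have h : Spc Y := Or.inr rfl
    refine ⟨(binv Y 0).1, ((hb Y h).2 0).1, ?_⟩
    have hze : Y = Z (binv Y 0).1 := Zuniq _ Y hY ((hb Y h).2 0).1
    simp only [← hze, dif_pos h]
    simp
  · -- h6
    intro e heX
    have hze : X = Z e := Zuniq e X hX heX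
    have h : ¬ Spc X := by
      rintro (h | h)
      · exact hXS h
      · exact hXY h
    simp only [← hze, dif_neg h]
    rw [dif_neg]
    rintro ⟨k, hk⟩
    exact Nat.succ_ne_zero _ hk

end CLAux

/-- In `L_K(E,C,S)` of a countable separated graph, for distinct finite
sets `X, Y ∈ C \ S` one has `Σ_{e∈X} e e* ≠ Σ_{f∈Y} f f*`. -/
theorem cohnLeavitt_sums_distinct
    (K V E : Type) [Field K] [Countable V] [Countable E] (r s : E → V)
    (C : Set (Set E))
    (hC1 : ∀ Y ∈ C, Y.Nonempty)
    (hC2 : ∀ Y ∈ C, ∀ e ∈ Y, ∀ f ∈ Y, s e = s f)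
    (hC3 : ∀ Y ∈ C, ∀ Z ∈ C, Y ≠ Z → Disjoint Y Z)
    (hC4 : ∀ e : E, ∃ Y ∈ C, e ∈ Y)
    (S : Set (Set E)) (hSC : S ⊆ C) (hSfin : ∀ X ∈ S, X.Finite)
    (X : Set E) (hX : X ∈ C) (hXS : X ∉ S) (hXfin : X.Finite)
    (Y : Set E) (hY : Y ∈ C) (hYS : Y ∉ S) (hYfin : Y.Finite)
    (hXY : X ≠ Y) :
    (∑ e ∈ hXfin.toFinset,
        clMk K V E r s C S hSfin (CLGen.edge e) *
          clMk K V E r s C S hSfin (CLGen.ghost e)) ≠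
      (∑ f ∈ hYfin.toFinset,
        clMk K V E r s C S hSfin (CLGen.edge f) *
          clMk K V E r s C S hSfin (CLGen.ghost f)) := by
  classical
  obtain ⟨φ, ψ, h1, h2, h3, h4, h5, h6⟩ :=
    CLAux.exists_clData E C hC1 hC3 hC4 S hSC hSfin X hX hXS Y hY hYfin hXY
  intro heq
  set F : FreeAlgebra K (CLGen V E) →ₐ[K] Module.End K ((V × ℕ) →₀ K) :=
    FreeAlgebra.lift K (CLAux.clRep (K := K) r s φ ψ) with hF
  have hcompat : ∀ ⦃a b : FreeAlgebra K (CLGen V E)⦄,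
      CLRel K V E r s C S hSfin a b → F a = F b := fun a b hab =>
    CLAux.clRep_compat r s C S hSfin hC2 hSC φ ψ h1 h2 h3 h4 hab
  set Φ : CohnLeavitt K V E r s C S hSfin →ₐ[K] Module.End K ((V × ℕ) →₀ K) :=
    RingQuot.liftAlgHom K ⟨F, hcompat⟩ with hΦ
  have hgen : ∀ g : CLGen V E,
      Φ (clMk K V E r s C S hSfin g) = CLAux.clRep (K := K) r s φ ψ g := by
    intro g
    simp only [clMk, hΦ, hF]
    rw [RingQuot.liftAlgHom_mkAlgHom_apply, FreeAlgebra.lift_ι_apply]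
  have h := congrArg Φ heq
  simp only [map_sum, map_mul, hgen] at h
  obtain ⟨f₀, hf₀Y, hf₀⟩ := h5
  have h' := DFunLike.congr_fun h (Finsupp.single ((s f₀, 0) : V × ℕ) (1 : K))
  rw [LinearMap.sum_apply, LinearMap.sum_apply,
    Finset.sum_congr rfl (fun e _ =>
      (Module.End.mul_apply _ _ _).trans (CLAux.clRep_eg r s φ ψ h2 e (s f₀) 0 1)),
    Finset.sum_congr rfl (fun e _ =>
      (Module.End.mul_apply _ _ _).trans (CLAux.clRep_eg r s φ ψ h2 e (s f₀) 0 1))] at h'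
  have hXzero : ∀ e ∈ hXfin.toFinset,
      (if s f₀ = s e ∧ (ψ e 0).isSome
        then Finsupp.single ((s f₀, 0) : V × ℕ) (1 : K) else (0 : (V × ℕ) →₀ K)) = 0 := by
    intro e he
    rw [Set.Finite.mem_toFinset] at he
    rw [if_neg]
    rintro ⟨-, hsome⟩
    rw [h6 e he] at hsome
    simp at hsome
  rw [Finset.sum_eq_zero hXzero, Finset.sum_eq_single f₀] at h'
  · rw [if_pos ⟨rfl, hf₀⟩] at h'
    exact one_ne_zero ((Finsupp.single_eq_same).symm.trans
      (DFunLike.congr_fun h'.symm ((s f₀, 0) : V × ℕ)))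
  · intro f hf hff₀
    rw [Set.Finite.mem_toFinset] at hf
    rw [if_neg]
    rintro ⟨-, hsome⟩
    obtain ⟨m, hm⟩ := Option.isSome_iff_exists.1 hsome
    have hφ := h2 f m 0 hm
    have h0 := h3 Y hY f₀ hf₀Y f hf (fun hh => hff₀ hh.symm) m
    rw [hφ] at h0
    rw [h0] at hf₀
    simp at hf₀
  · intro hne
    exact absurd (Set.Finite.mem_toFinset _ |>.mpr hf₀Y) hne
end

section
/- Let X₁, …, Xₘ ∈ C_v be pairwise distinct sets in the partition of s⁻¹(v), with X_{n+1}, …, Xₘ ∉ S, and let e_i ∈ X_i for 1 ≤ i ≤ n. Then in the branching system constructed in Theorem 3.1 (via nested interval partitions), the set R_{e₁} ∩ … ∩ R_{eₙ} ∩ (D_v \ ⋃_{e∈X_{n+1}} R_e) ∩ … ∩ (D_v \ ⋃_{e∈Xₘ} R_e) is nonempty. -/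
/-!
A point of the model space is a triple `(v, x, t)`: a vertex `v`, a choice `x` picking for
every class `Y ∈ C` either an edge of `Y` or nothing (nothing is forbidden when `Y ∈ S`), and a
real `t`. `D v` consists of the points over `v`, and `R e` of the points over `s e` whose choice
picks `e`. Edges of one class then get disjoint sets, a class in `S` covers `D v` because
something is picked on it, and the remark holds because any pattern of picks (`eᵢ` on `Xᵢ` for
`i < n`, nothing on the `Xᵢ ∉ S`) extends to a choice. The classes are countable, so the space
has the cardinality of the continuum and embeds into `ℝ`; thanks to the real coordinate every
`D v` and `R e` has that cardinality too, which yields the bijections `f e`.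
-/

open Set Function Cardinal

universe u

theorem exists_injective_prod_arrow_real (α β γ : Type*) [Countable α] [Countable β]
    [Countable γ] : ∃ ι : (α × (β → γ)) × ℝ → ℝ, Injective ι := by
  obtain ⟨a⟩ := nonempty_embedding_nat α
  obtain ⟨b⟩ := nonempty_embedding_nat β
  obtain ⟨c⟩ := nonempty_embedding_nat γ
  have hcode : (α × (β → γ)) × ℝ ↪ (ℕ × (ℕ → ℕ)) × ℝ :=
    (a.prodMap ((Embedding.arrowCongrRight c).trans (Embedding.arrowCongrLeft b))).prodMap
      (Embedding.refl ℝ)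
  have hcard : #((ℕ × (ℕ → ℕ)) × ℝ) ≤ #ℝ := by
    simp [mk_prod, aleph0_power_aleph0, mk_real]
  obtain ⟨g⟩ := hcard
  exact ⟨g ∘ hcode, g.injective.comp hcode.injective⟩

theorem Set.countable_of_pairwiseDisjoint_nonempty {E : Type*} [Countable E] {C : Set (Set E)}
    (hne : ∀ Y ∈ C, Y.Nonempty) (hdisj : C.PairwiseDisjoint id) : C.Countable := by
  have hinj : Injective fun Y : C => (hne Y Y.2).some := by
    intro Y Z h
    by_contra hYZ
    exact (hdisj Y.2 Z.2 (Subtype.coe_injective.ne hYZ)).ne_of_mem (hne Y Y.2).some_mem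
      (hne Z Z.2).some_mem h
  exact hinj.countable

theorem Set.exists_bijOn_of_mk_eq {α β : Type u} [Nonempty β] {s : Set α} {t : Set β}
    (h : #s = #t) : ∃ f : α → β, BijOn f s t := by
  classical
  obtain ⟨φ⟩ := Cardinal.eq.1 h
  refine ⟨fun a => if ha : a ∈ s then φ ⟨a, ha⟩ else Classical.arbitrary β, ?_, ?_, ?_⟩
  · intro a ha
    simp [ha]
  · intro a ha b hb hab
    simp only [ha, hb, dite_true] at hab
    simpa using φ.injective (Subtype.ext hab)
  · intro y hy
    exact ⟨φ.symm ⟨y, hy⟩, (φ.symm ⟨y, hy⟩).2, by simp⟩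

theorem mk_image_prod_univ_eq_continuum {α : Type*} {ι : α × ℝ → ℝ} (hι : Injective ι)
    {A : Set α} (hA : A.Nonempty) : #(ι '' (A ×ˢ Set.univ)) = 𝔠 := by
  refine le_antisymm (mk_real ▸ mk_set_le _) ?_
  obtain ⟨a, ha⟩ := hA
  rw [← mk_real]
  refine mk_le_of_injective (f := fun t => ⟨ι (a, t), mem_image_of_mem ι ⟨ha, mem_univ t⟩⟩)
    fun t t' h => ?_
  simpa using hι (Subtype.ext_iff.1 h)

namespace BranchingModel

variable {V E : Type*} (C S : Set (Set E))

def IsChoice (x : C → Option E) : Prop :=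
  ∀ Y : C, (∀ e ∈ x Y, e ∈ (Y : Set E)) ∧ ((Y : Set E) ∈ S → x Y ≠ none)

def vertexBase (v : V) : Set (V × (C → Option E)) :=
  {q | q.1 = v ∧ IsChoice C S q.2}

def edgeBase (s : E → V) (e : E) : Set (V × (C → Option E)) :=
  {q | q ∈ vertexBase C S (s e) ∧ ∀ Y : C, e ∈ (Y : Set E) → q.2 Y = some e}

variable {C S}

theorem exists_isChoice_extend (hC1 : ∀ Y ∈ C, Y.Nonempty) {ι : Type*} {X : ι → C}
    (hX : Injective X) (o : ι → Option E) (ho_mem : ∀ i, ∀ e ∈ o i, e ∈ (X i : Set E))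
    (ho_ne : ∀ i, (X i : Set E) ∈ S → o i ≠ none) :
    ∃ x, IsChoice C S x ∧ ∀ i, x (X i) = o i := by
  refine ⟨extend X o fun Y => some (hC1 Y Y.2).some, fun Y => ?_, hX.extend_apply o _⟩
  by_cases hY : ∃ i, X i = Y
  · obtain ⟨i, rfl⟩ := hY
    rw [hX.extend_apply]
    exact ⟨ho_mem i, ho_ne i⟩
  · rw [extend_apply' _ _ _ hY]
    exact ⟨fun e he => Option.mem_some_iff.1 he ▸ (hC1 Y Y.2).some_mem, fun _ => nofun⟩

theorem vertexBase_nonempty (hC1 : ∀ Y ∈ C, Y.Nonempty) (v : V) :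
    (vertexBase C S v).Nonempty := by
  obtain ⟨x, hx, -⟩ := exists_isChoice_extend (S := S) hC1
    (injective_of_subsingleton (isEmptyElim : Empty → C)) isEmptyElim isEmptyElim isEmptyElim
  exact ⟨(v, x), rfl, hx⟩

theorem edgeBase_nonempty (hC1 : ∀ Y ∈ C, Y.Nonempty) (s : E → V) (e : E) :
    (edgeBase C S s e).Nonempty := by
  obtain ⟨x, hx, hxe⟩ := exists_isChoice_extend (S := S) hC1
    (X := fun Y : {Y : C // e ∈ (Y : Set E)} => Y.1) Subtype.val_injective (fun _ => some e)
    (fun Y _ he => Option.mem_some_iff.1 he ▸ Y.2) (fun _ _ => nofun)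
  exact ⟨(s e, x), ⟨rfl, hx⟩, fun Y hY => hxe ⟨Y, hY⟩⟩

theorem edgeBase_subset (s : E → V) (e : E) : edgeBase C S s e ⊆ vertexBase C S (s e) :=
  fun _ hq => hq.1

theorem disjoint_vertexBase {u v : V} (huv : u ≠ v) :
    Disjoint (vertexBase C S u) (vertexBase C S v) :=
  disjoint_left.2 fun _ hu hv => huv (hu.1.symm.trans hv.1)

theorem disjoint_edgeBase (s : E → V) {Y : C} {e d : E} (he : e ∈ (Y : Set E))
    (hd : d ∈ (Y : Set E)) (hed : e ≠ d) : Disjoint (edgeBase C S s e) (edgeBase C S s d) :=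
  disjoint_left.2 fun _ hqe hqd =>
    hed (Option.some_injective _ ((hqe.2 Y he).symm.trans (hqd.2 Y hd)))

theorem vertexBase_eq_biUnion_edgeBase (hC3 : C.PairwiseDisjoint id) (s : E → V) {Y : Set E}
    (hYS : Y ∈ S) (hYC : Y ∈ C) {v : V} (hv : ∀ e ∈ Y, s e = v) :
    vertexBase C S v = ⋃ e ∈ Y, edgeBase C S s e := by
  refine Subset.antisymm (fun q hq => ?_)
    (iUnion₂_subset fun e he => hv e he ▸ edgeBase_subset s e)
  obtain ⟨e, he⟩ := Option.ne_none_iff_exists'.1 ((hq.2 ⟨Y, hYC⟩).2 hYS)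
  have heY : e ∈ Y := (hq.2 ⟨Y, hYC⟩).1 e he
  refine mem_iUnion₂.2 ⟨e, heY, ⟨hv e heY ▸ hq, fun Z heZ => ?_⟩⟩
  have hZY : Z = ⟨Y, hYC⟩ := Subtype.ext (hC3.elim Z.2 hYC (not_disjoint_iff.2 ⟨e, heZ, heY⟩))
  rw [hZY, he]

theorem exists_mem_edgeBase_and_not_mem (hC1 : ∀ Y ∈ C, Y.Nonempty)
    (hC3 : C.PairwiseDisjoint id) (s : E → V) {ι : Type*} (P : ι → Prop) [DecidablePred P]
    {X : ι → Set E} (hXC : ∀ i, X i ∈ C) (hX : Injective X) {v : V}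
    (hXv : ∀ i, ∀ e ∈ X i, s e = v) (hXS : ∀ i, ¬P i → X i ∉ S) (es : ι → E)
    (hes : ∀ i, P i → es i ∈ X i) :
    ∃ q ∈ vertexBase C S v, (∀ i, P i → q ∈ edgeBase C S s (es i)) ∧
      ∀ i, ¬P i → ∀ e ∈ X i, q ∉ edgeBase C S s e := by
  let X' : ι → C := fun i => ⟨X i, hXC i⟩
  obtain ⟨x, hx, hxX⟩ := exists_isChoice_extend (S := S) hC1 (X := X')
    (fun i j h => hX (congrArg Subtype.val h)) (fun i => if P i then some (es i) else none)
    (fun i e he => by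
      split_ifs at he with hi
      exacts [Option.mem_some_iff.1 he ▸ hes i hi, by simp at he])
    (fun i hiS => by split_ifs with hi; exacts [nofun, absurd hiS (hXS i hi)])
  refine ⟨(v, x), ⟨rfl, hx⟩, fun i hi => ⟨⟨(hXv i _ (hes i hi)).symm, hx⟩, fun Y hY => ?_⟩,
    fun i hi e he hq => ?_⟩
  · have hYX : Y = X' i :=
      Subtype.ext (hC3.elim Y.2 (hXC i) (not_disjoint_iff.2 ⟨_, hY, hes i hi⟩))
    simp [hYX, hxX, hi]
  · simpa [hxX, hi] using hq.2 (X' i) he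

end BranchingModel

open BranchingModel in
theorem exists_branching_system_remark_general
    (V E : Type*) [Countable V] [Countable E] (r s : E → V)
    (C : Set (Set E))
    (hC1 : ∀ Y ∈ C, Y.Nonempty)
    (hC3 : ∀ Y ∈ C, ∀ Z ∈ C, Y ≠ Z → Disjoint Y Z)
    (S : Set (Set E)) (hSC : S ⊆ C) :
    ∃ (𝕏 : Set ℝ) (R : E → Set ℝ) (D : V → Set ℝ) (f : E → ℝ → ℝ),
      (∀ e, R e ⊆ 𝕏) ∧ (∀ v, D v ⊆ 𝕏) ∧
      -- the branching-system conditions of Definition 2.1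
      (∀ Y ∈ C, ∀ e ∈ Y, ∀ d ∈ Y, e ≠ d → Disjoint (R e) (R d)) ∧
      (∀ u v : V, u ≠ v → Disjoint (D u) (D v)) ∧
      (∀ e, R e ⊆ D (s e)) ∧
      (∀ Y ∈ S, ∀ v : V, (∀ e ∈ Y, s e = v) → D v = ⋃ e ∈ Y, R e) ∧
      (∀ e, Set.BijOn (f e) (D (r e)) (R e)) ∧
      -- Remark 3.2
      (∀ (n m : ℕ), n ≤ m → ∀ (Xs : Fin m → Set E) (v : V),
        (∀ i, Xs i ∈ C) → Function.Injective Xs →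
        (∀ i, ∀ e ∈ Xs i, s e = v) →
        (∀ i : Fin m, n ≤ (i : ℕ) → Xs i ∉ S) →
        ∀ es : Fin m → E, (∀ i : Fin m, (i : ℕ) < n → es i ∈ Xs i) →
        ((⋂ i ∈ {i : Fin m | (i : ℕ) < n}, R (es i)) ∩
          ⋂ i ∈ {i : Fin m | n ≤ (i : ℕ)}, (D v \ ⋃ e ∈ Xs i, R e)).Nonempty) := by
  have : Countable C := (countable_of_pairwiseDisjoint_nonempty hC1 hC3).to_subtype
  obtain ⟨ι, hι⟩ := exists_injective_prod_arrow_real V C (Option E)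
  set D : V → Set ℝ := fun v => ι '' (vertexBase C S v ×ˢ Set.univ)
  set R : E → Set ℝ := fun e => ι '' (edgeBase C S s e ×ˢ Set.univ)
  have hbij : ∀ e, ∃ f, BijOn f (D (r e)) (R e) := fun e => exists_bijOn_of_mk_eq <| by
    rw [mk_image_prod_univ_eq_continuum hι (vertexBase_nonempty hC1 _),
      mk_image_prod_univ_eq_continuum hι (edgeBase_nonempty hC1 s e)]
  choose f hf using hbij
  refine ⟨Set.univ, R, D, f, fun _ => subset_univ _, fun _ => subset_univ _,
    ?_, ?_, ?_, ?_, hf, ?_⟩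
  · intro Y hY e he d hd hed
    exact (disjoint_image_iff hι).2
      ((disjoint_edgeBase (Y := ⟨Y, hY⟩) s he hd hed).set_prod_left _ _)
  · intro u v huv
    exact (disjoint_image_iff hι).2 ((disjoint_vertexBase huv).set_prod_left _ _)
  · exact fun e => image_mono (prod_mono (edgeBase_subset s e) subset_rfl)
  · intro Y hYS v hv
    simp only [D, R, vertexBase_eq_biUnion_edgeBase hC3 s hYS (hSC hYS) hv, iUnion₂_prod_const,
      image_iUnion₂]
  · intro n m _ Xs v hXC hXinj hXv hXS es hes
    obtain ⟨q, hqv, hq_edge, hq_not⟩ := exists_mem_edgeBase_and_not_mem hC1 hC3 s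
      (fun i : Fin m => (i : ℕ) < n) hXC hXinj hXv (fun i hi => hXS i (not_lt.1 hi)) es hes
    refine ⟨ι (q, 0), ?_, ?_⟩
    · simpa [R, hι.mem_set_image] using hq_edge
    · refine mem_iInter₂.2 fun i hi => ?_
      simpa [D, R, hι.mem_set_image, hqv] using hq_not i (not_lt.2 hi)

/-- Remark 3.2: The branching system constructed in Theorem 3.1 has the
following property: if `X₁, …, Xₙ, …, Xₘ ∈ C_v` are pairwise distinct classes with
`X_{n+1}, …, Xₘ ∉ S` and `e_i ∈ X_i` for `1 ≤ i ≤ n`, then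
`R_{e₁} ∩ … ∩ R_{eₙ} ∩ (D_v \ ⋃_{e∈X_{n+1}} R_e) ∩ … ∩ (D_v \ ⋃_{e∈Xₘ} R_e) ≠ ∅`.
We state this as: there exists a branching system (as in Theorem 3.1) with this extra
property. -/
theorem exists_branching_system_remark
    (V E : Type*) [Countable V] [Countable E] (r s : E → V)
    (C : Set (Set E))
    (hC1 : ∀ Y ∈ C, Y.Nonempty)
    (hC2 : ∀ Y ∈ C, ∀ e ∈ Y, ∀ f ∈ Y, s e = s f)
    (hC3 : ∀ Y ∈ C, ∀ Z ∈ C, Y ≠ Z → Disjoint Y Z)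
    (hC4 : ∀ e : E, ∃ Y ∈ C, e ∈ Y)
    (S : Set (Set E)) (hSC : S ⊆ C) (hSfin : ∀ X ∈ S, X.Finite) :
    ∃ (𝕏 : Set ℝ) (R : E → Set ℝ) (D : V → Set ℝ) (f : E → ℝ → ℝ),
      (∀ e, R e ⊆ 𝕏) ∧ (∀ v, D v ⊆ 𝕏) ∧
      -- the branching-system conditions of Definition 2.1
      (∀ Y ∈ C, ∀ e ∈ Y, ∀ d ∈ Y, e ≠ d → Disjoint (R e) (R d)) ∧
      (∀ u v : V, u ≠ v → Disjoint (D u) (D v)) ∧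
      (∀ e, R e ⊆ D (s e)) ∧
      (∀ Y ∈ S, ∀ v : V, (∀ e ∈ Y, s e = v) → D v = ⋃ e ∈ Y, R e) ∧
      (∀ e, Set.BijOn (f e) (D (r e)) (R e)) ∧
      -- Remark 3.2
      (∀ (n m : ℕ), n ≤ m → ∀ (Xs : Fin m → Set E) (v : V),
        (∀ i, Xs i ∈ C) → Function.Injective Xs →
        (∀ i, ∀ e ∈ Xs i, s e = v) →
        (∀ i : Fin m, n ≤ (i : ℕ) → Xs i ∉ S) →
        ∀ es : Fin m → E, (∀ i : Fin m, (i : ℕ) < n → es i ∈ Xs i) →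
        ((⋂ i ∈ {i : Fin m | (i : ℕ) < n}, R (es i)) ∩
          ⋂ i ∈ {i : Fin m | n ≤ (i : ℕ)}, (D v \ ⋃ e ∈ Xs i, R e)).Nonempty) :=
  exists_branching_system_remark_general V E r s C hC1 hC3 S hSC
end
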